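/- arXiv:2306.13753 — 9 statements merged into one kernel-verified Lean document; each statement's English description precedes it below -/
import Mathlib

section
/- The Integrated Gradients method satisfies non-decreasing positivity: if F : [a,b] → ℝ is continuously differentiable and F is non-decreasing from x' to x̄ (meaning F∘γ is monotone non-decreasing in t for every monotone path γ from x' to x̄), then IG_i(x̄, x', F) ≥ 0 for every component i. -/
open MeasureTheory

/-- The partial derivative of `F : ℝⁿ → ℝ` in the `i`-th coordinate at `x`. -/
noncomputable def pderiv' {n : ℕ} (F : (Fin n → ℝ) → ℝ) (i : Fin n) (x : Fin n → ℝ) : ℝ :=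
  deriv (fun t => F (Function.update x i t)) (x i)

/-- The Integrated Gradients attribution:
`IG_i(x̄, x', F) = (x̄_i − x'_i) ∫₀¹ (∂F/∂x_i)(x' + t(x̄ − x')) dt`. -/
noncomputable def IG {n : ℕ} (xbar x' : Fin n → ℝ) (F : (Fin n → ℝ) → ℝ) : Fin n → ℝ :=
  fun i => (xbar i - x' i) * ∫ t in (0:ℝ)..1, pderiv' F i (x' + t • (xbar - x'))

/-- `γ` is piecewise smooth on `[0,1]`: there is a partition
`0 = p 0 < p 1 < ... < p k = 1` such that `γ` is continuously differentiable on
each subinterval. -/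
def PiecewiseSmooth {n : ℕ} (γ : ℝ → (Fin n → ℝ)) : Prop :=
  ∃ k : ℕ, ∃ p : Fin (k + 1) → ℝ, StrictMono p ∧ p 0 = 0 ∧ p (Fin.last k) = 1 ∧
    ∀ j : Fin k, ContDiffOn ℝ 1 γ (Set.Icc (p j.castSucc) (p j.succ))

/-- A monotone path in `[a,b]` from `x'` to `x̄`: a continuous, piecewise smooth
curve staying in `[a,b]`, each of whose components is monotone in `t`. -/
def IsMonotonePath {n : ℕ} (a b x' xbar : Fin n → ℝ) (γ : ℝ → (Fin n → ℝ)) : Prop :=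
  ContinuousOn γ (Set.Icc 0 1) ∧ PiecewiseSmooth γ ∧
  γ 0 = x' ∧ γ 1 = xbar ∧ (∀ t ∈ Set.Icc (0:ℝ) 1, γ t ∈ Set.uIcc a b) ∧
  ∀ i, MonotoneOn (fun t => γ t i) (Set.Icc 0 1) ∨ AntitoneOn (fun t => γ t i) (Set.Icc 0 1)

/-- `F` is non-decreasing from `x'` to `x̄`: `F ∘ γ` is monotone non-decreasing in `t`
for every monotone path `γ` from `x'` to `x̄`. -/
def NonDecreasingFromTo {n : ℕ} (a b x' xbar : Fin n → ℝ) (F : (Fin n → ℝ) → ℝ) : Prop :=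
  ∀ γ : ℝ → (Fin n → ℝ), IsMonotonePath a b x' xbar γ →
    MonotoneOn (fun t => F (γ t)) (Set.Icc 0 1)

/-! Fix `t ∈ [0, 1)` and `x = x' + t • (x̄ - x')`. Moving every coordinate `j` along its
segment `[x'_j, x̄_j]` on a smooth schedule that pauses at `t` for all `j ≠ i`, we obtain a
monotone path from `x'` to `x̄` that reaches `x` and then, for a while, moves only the `i`-th
coordinate towards `x̄_i`. Since `F` is non-decreasing along this path,
`u ↦ F (x + u (x̄_i - x'_i) eᵢ)` is non-decreasing on `[0, (1 - t)/2]`, so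
`(x̄_i - x'_i) ∂ᵢF(x) ≥ 0`. Integrating over `t` gives the sign of `IG_i`. -/

open Set Function Real

theorem monotoneOn_of_monotoneOn_comp {β : Type*} [Preorder β] {φ : ℝ → β} {s : ℝ → ℝ}
    {c d : ℝ} (hcd : c ≤ d) (hs : ContinuousOn s (Icc c d)) (hsm : MonotoneOn s (Icc c d))
    (h : MonotoneOn (φ ∘ s) (Icc c d)) : MonotoneOn φ (Icc (s c) (s d)) := by
  intro u hu v hv huv
  obtain ⟨p, hp, rfl⟩ := intermediate_value_Icc hcd hs hu
  obtain ⟨q, hq, rfl⟩ := intermediate_value_Icc hcd hs hv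
  rcases le_total p q with hpq | hqp
  · exact h hp hq hpq
  · rw [le_antisymm huv (hsm hq hp hqp)]

theorem HasDerivAt.nonneg_of_monotoneOn_Icc {f : ℝ → ℝ} {f' x y : ℝ} (hf : HasDerivAt f f' x)
    (hxy : x < y) (hf_mono : MonotoneOn f (Icc x y)) : 0 ≤ f' := by
  refine hf.hasDerivWithinAt.nonneg_of_monotoneOn ?_ hf_mono
  rw [accPt_principal_iff_nhdsWithin]
  exact (left_nhdsWithin_Ioo_neBot hxy).mono
    (nhdsWithin_mono _ fun u hu => ⟨Ioo_subset_Icc_self hu, hu.1.ne'⟩)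

theorem ContDiff.piecewiseSmooth {n : ℕ} {γ : ℝ → Fin n → ℝ} (hγ : ContDiff ℝ 1 γ) :
    PiecewiseSmooth γ :=
  ⟨1, ![0, 1], by simp [StrictMono, Fin.forall_fin_two], rfl, rfl, fun _ => hγ.contDiffOn⟩

/-- Rises smoothly by `p` on `[0, 1/3]`, by `q` on `[1/3, 2/3]` and by `1 - p - q` on
`[2/3, 1]`, and is constant in between. -/
noncomputable def staircase (p q r : ℝ) : ℝ :=
  p * smoothTransition (3 * r) + q * smoothTransition (3 * r - 1) +
    (1 - p - q) * smoothTransition (3 * r - 2)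

section staircase

variable {p q : ℝ}

@[simp] theorem staircase_zero : staircase p q 0 = 0 := by
  simp [staircase, smoothTransition.zero_of_nonpos]

@[simp] theorem staircase_one : staircase p q 1 = 1 := by
  norm_num [staircase, smoothTransition.one_of_one_le]

theorem contDiff_staircase {n : ℕ∞} : ContDiff ℝ n (staircase p q) := by
  unfold staircase
  fun_prop

theorem monotone_staircase (hp : 0 ≤ p) (hq : 0 ≤ q) (hpq : p + q ≤ 1) :
    Monotone (staircase p q) := by
  intro r r' h
  unfold staircase
  gcongr
  all_goals first | linarith | exact smoothTransition.monotone (by linarith)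

theorem staircase_of_mem_Icc {r : ℝ} (hr : r ∈ Icc (1 / 3) (2 / 3)) :
    staircase p q r = p + q * smoothTransition (3 * r - 1) := by
  rw [staircase, smoothTransition.one_of_one_le (x := 3 * r) (by linarith [hr.1]),
    smoothTransition.zero_of_nonpos (x := 3 * r - 2) (by linarith [hr.2])]
  ring

end staircase

def progressPath {ι : Type*} (x' xbar : ι → ℝ) (s : ι → ℝ → ℝ) (r : ℝ) : ι → ℝ :=
  fun j => x' j + s j r * (xbar j - x' j)

theorem isMonotonePath_progressPath {n : ℕ} {a b x' xbar : Fin n → ℝ} {s : Fin n → ℝ → ℝ}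
    (hx' : x' ∈ uIcc a b) (hxbar : xbar ∈ uIcc a b) (hs : ∀ j, ContDiff ℝ 1 (s j))
    (hs_mono : ∀ j, Monotone (s j)) (hs0 : ∀ j, s j 0 = 0) (hs1 : ∀ j, s j 1 = 1) :
    IsMonotonePath a b x' xbar (progressPath x' xbar s) := by
  have hγ : ContDiff ℝ 1 (progressPath x' xbar s) :=
    contDiff_pi.mpr fun j => contDiff_const.add ((hs j).mul contDiff_const)
  have hs_mem : ∀ j, ∀ r ∈ Icc (0 : ℝ) 1, s j r ∈ Icc (0 : ℝ) 1 := fun j r hr =>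
    ⟨hs0 j ▸ hs_mono j hr.1, hs1 j ▸ hs_mono j hr.2⟩
  refine ⟨hγ.continuous.continuousOn, hγ.piecewiseSmooth, ?_, ?_, ?_, ?_⟩
  · funext j; simp [progressPath, hs0]
  · funext j; simp [progressPath, hs1]
  · intro r hr
    rw [← pi_univ_uIcc] at hx' hxbar ⊢
    intro j _
    simpa [progressPath] using (convex_uIcc (a j) (b j)).add_smul_sub_mem (hx' j trivial)
      (hxbar j trivial) (hs_mem j r hr)
  · intro j
    rcases le_total 0 (xbar j - x' j) with hj | hj
    · exact .inl fun u _ v _ huv => by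
        simpa [progressPath] using mul_le_mul_of_nonneg_right (hs_mono j huv) hj
    · exact .inr fun u _ v _ huv => by
        simpa [progressPath] using mul_le_mul_of_nonpos_right (hs_mono j huv) hj

theorem NonDecreasingFromTo.monotoneOn_update {n : ℕ} {a b x' xbar : Fin n → ℝ}
    {F : (Fin n → ℝ) → ℝ} (hnd : NonDecreasingFromTo a b x' xbar F) (hx' : x' ∈ uIcc a b)
    (hxbar : xbar ∈ uIcc a b) {t : ℝ} (ht : t ∈ Ico (0 : ℝ) 1) (i : Fin n) :
    MonotoneOn (fun u => F (update (x' + t • (xbar - x')) i (x' i + (t + u) * (xbar i - x' i))))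
      (Icc 0 ((1 - t) / 2)) := by
  set h := (1 - t) / 2 with h_def
  have hh : 0 ≤ h := by linarith [ht.2]
  have hth : t + h ≤ 1 := by linarith [ht.1]
  set s : Fin n → ℝ → ℝ := fun j => staircase t (if j = i then h else 0)
  have hpath : IsMonotonePath a b x' xbar (progressPath x' xbar s) :=
    isMonotonePath_progressPath hx' hxbar (fun _ => contDiff_staircase)
      (fun j => monotone_staircase ht.1 (by split_ifs <;> linarith)
        (by split_ifs <;> linarith [ht.2]))
      (fun _ => staircase_zero) (fun _ => staircase_one)
  set c : ℝ → ℝ := fun r => h * smoothTransition (3 * r - 1)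
  -- on `[1/3, 2/3]` only the `i`-th coordinate of the path moves
  have hmid : EqOn (fun r => F (progressPath x' xbar s r))
      ((fun u => F (update (x' + t • (xbar - x')) i (x' i + (t + u) * (xbar i - x' i)))) ∘ c)
      (Icc (1 / 3) (2 / 3)) := by
    intro r hr
    simp only [comp_apply]
    congr 1
    funext j
    rcases eq_or_ne j i with rfl | hj
    · simp [progressPath, s, c, staircase_of_mem_Icc hr]
    · simp [progressPath, s, staircase_of_mem_Icc hr, hj]
  have hc := monotoneOn_of_monotoneOn_comp (c := 1 / 3) (d := 2 / 3) (by norm_num)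
    (by fun_prop) (fun r _ r' _ hr =>
      mul_le_mul_of_nonneg_left (smoothTransition.monotone (by linarith)) hh)
    ((hnd _ hpath).mono (Icc_subset_Icc (by norm_num) (by norm_num)) |>.congr hmid)
  convert hc using 2 <;>
    norm_num [c, smoothTransition.zero_of_nonpos, smoothTransition.one_of_one_le]

theorem NonDecreasingFromTo.mul_pderiv'_nonneg {n : ℕ} {a b x' xbar : Fin n → ℝ}
    {F : (Fin n → ℝ) → ℝ} (hnd : NonDecreasingFromTo a b x' xbar F) (hx' : x' ∈ uIcc a b)
    (hxbar : xbar ∈ uIcc a b) {t : ℝ} (ht : t ∈ Ico (0 : ℝ) 1) (i : Fin n) :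
    0 ≤ (xbar i - x' i) * pderiv' F i (x' + t • (xbar - x')) := by
  set x := x' + t • (xbar - x')
  by_cases hg : DifferentiableAt ℝ (fun w => F (update x i w)) (x i)
  · have hline : HasDerivAt (fun u => x' i + (t + u) * (xbar i - x' i)) (xbar i - x' i) 0 := by
      simpa using ((hasDerivAt_id (0 : ℝ)).const_add t |>.mul_const (xbar i - x' i)).const_add (x' i)
    have hφ : HasDerivAt (fun u => F (update x i (x' i + (t + u) * (xbar i - x' i))))
        (pderiv' F i x * (xbar i - x' i)) 0 :=
      hg.hasDerivAt.comp_of_eq 0 hline (by simp [x])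
    rw [mul_comm]
    exact hφ.nonneg_of_monotoneOn_Icc (by linarith [ht.2]) (hnd.monotoneOn_update hx' hxbar ht i)
  · -- the junk value: `pderiv'` is `0` where the partial derivative does not exist
    simp [pderiv', deriv_zero_of_not_differentiableAt hg]

theorem IG_NDP_general {n : ℕ} (a b : Fin n → ℝ) (F : (Fin n → ℝ) → ℝ)
    (xbar x' : Fin n → ℝ) (hxbar : xbar ∈ Set.uIcc a b) (hx' : x' ∈ Set.uIcc a b)
    (hnd : NonDecreasingFromTo a b x' xbar F) :
    ∀ i, 0 ≤ IG xbar x' F i := by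
  intro i
  rw [IG, ← intervalIntegral.integral_const_mul]
  refine intervalIntegral.integral_nonneg_of_ae_restrict zero_le_one ?_
  rw [Measure.restrict_congr_set Ico_ae_eq_Icc.symm]
  filter_upwards [ae_restrict_mem measurableSet_Ico] with t ht
  exact hnd.mul_pderiv'_nonneg hx' hxbar ht i

/-- **Non-decreasing positivity of Integrated Gradients**: if `F` is continuously
differentiable on `[a,b]` and non-decreasing from `x'` to `x̄`, then
`IG_i(x̄, x', F) ≥ 0` for every component `i`. -/
theorem IG_NDP {n : ℕ} (a b : Fin n → ℝ) (F : (Fin n → ℝ) → ℝ)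
    (hF : ContDiffOn ℝ 1 F (Set.uIcc a b))
    (xbar x' : Fin n → ℝ) (hxbar : xbar ∈ Set.uIcc a b) (hx' : x' ∈ Set.uIcc a b)
    (hnd : NonDecreasingFromTo a b x' xbar F) :
    ∀ i, 0 ≤ IG xbar x' F i :=
  IG_NDP_general a b F xbar x' hxbar hx' hnd
end

section
/- The Integrated Gradients method satisfies affine scale invariance: for any index i, constants c ≠ 0 and d, and the affine transformation T(x) := (x_1, ..., c·x_i + d, ..., x_n), whenever x̄, x', T(x̄), T(x') ∈ [a,b] and IG(x̄, x', F) is defined for a continuously differentiable F, one has IG(x̄, x', F) = IG(T(x̄), T(x'), F ∘ T⁻¹). -/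
open MeasureTheory

/-- The affine transformation `T(x) = (x_1, ..., c·x_i + d, ..., x_n)`. -/
def affineT {n : ℕ} (i : Fin n) (c d : ℝ) (x : Fin n → ℝ) : Fin n → ℝ :=
  Function.update x i (c * x i + d)

/-- The inverse affine transformation `T⁻¹(x) = (x_1, ..., (x_i − d)/c, ..., x_n)`. -/
noncomputable def affineTinv {n : ℕ} (i : Fin n) (c d : ℝ) (x : Fin n → ℝ) : Fin n → ℝ :=
  Function.update x i ((x i - d) / c)

/-! The transformation `T` is affine in the `i`-th coordinate only, and it maps the straight path
from `x'` to `x̄` onto the straight path from `T x'` to `T x̄`. Along that path `F ∘ T⁻¹` has the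
same partial derivatives as `F` in every coordinate `j ≠ i`, while in coordinate `i` the chain rule
contributes a factor `c⁻¹`, which cancels against the factor `c` in `T(x̄)_i − T(x')_i`. -/

section

variable {𝕜 E : Type*} [NontriviallyNormedField 𝕜] [NormedAddCommGroup E] [NormedSpace 𝕜 E]

theorem deriv_comp_sub_div (f : 𝕜 → E) (c d x : 𝕜) :
    deriv (fun s => f ((s - d) / c)) x = c⁻¹ • deriv f ((x - d) / c) := by
  simp only [div_eq_inv_mul]
  exact (deriv_comp_sub_const (fun u => f (c⁻¹ * u)) d x).trans (deriv_comp_mul_left _ _ _)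

end

section

variable {n : ℕ} {i j : Fin n} {c d : ℝ}

theorem affineT_of_ne (hj : j ≠ i) (x : Fin n → ℝ) : affineT i c d x j = x j :=
  Function.update_of_ne hj _ _

theorem affineT_self (x : Fin n → ℝ) : affineT i c d x i = c * x i + d :=
  Function.update_self _ _ _

theorem affineT_add_smul_sub (x y : Fin n → ℝ) (t : ℝ) :
    affineT i c d y + t • (affineT i c d x - affineT i c d y) = affineT i c d (y + t • (x - y)) := by
  funext k
  rcases eq_or_ne k i with rfl | hk
  · simp only [Pi.add_apply, Pi.smul_apply, Pi.sub_apply, smul_eq_mul, affineT_self]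
    ring
  · simp only [Pi.add_apply, Pi.smul_apply, Pi.sub_apply, affineT_of_ne hk]

theorem affineT_update_of_ne (hj : j ≠ i) (x : Fin n → ℝ) (t : ℝ) :
    Function.update (affineT i c d x) j t = affineT i c d (Function.update x j t) := by
  simp only [affineT, Function.update_of_ne hj.symm, Function.update_comm hj]

theorem affineTinv_affineT (hc : c ≠ 0) (x : Fin n → ℝ) :
    affineTinv i c d (affineT i c d x) = x := by
  rw [affineTinv, affineT_self, add_sub_cancel_right, mul_div_cancel_left₀ _ hc, affineT,
    Function.update_idem, Function.update_eq_self]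

theorem affineTinv_update_affineT_self (x : Fin n → ℝ) (s : ℝ) :
    affineTinv i c d (Function.update (affineT i c d x) i s) =
      Function.update x i ((s - d) / c) := by
  simp only [affineTinv, affineT, Function.update_self, Function.update_idem]

theorem pderiv'_comp_affineTinv_of_ne (hj : j ≠ i) (hc : c ≠ 0) (F : (Fin n → ℝ) → ℝ)
    (x : Fin n → ℝ) : pderiv' (F ∘ affineTinv i c d) j (affineT i c d x) = pderiv' F j x := by
  simp only [pderiv', Function.comp_def, affineT_update_of_ne hj, affineTinv_affineT hc,
    affineT_of_ne hj]

theorem pderiv'_comp_affineTinv_self (hc : c ≠ 0) (F : (Fin n → ℝ) → ℝ) (x : Fin n → ℝ) :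
    pderiv' (F ∘ affineTinv i c d) i (affineT i c d x) = c⁻¹ * pderiv' F i x := by
  simp only [pderiv', Function.comp_def, affineTinv_update_affineT_self, affineT_self]
  rw [deriv_comp_sub_div (fun t => F (Function.update x i t)), add_sub_cancel_right,
    mul_div_cancel_left₀ _ hc, smul_eq_mul]

end

theorem IG_ASI_general {n : ℕ} (F : (Fin n → ℝ) → ℝ)
    (i : Fin n) (c d : ℝ) (hc : c ≠ 0)
    (xbar x' : Fin n → ℝ) :
    IG xbar x' F = IG (affineT i c d xbar) (affineT i c d x') (F ∘ affineTinv i c d) := by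
  funext j
  simp only [IG, affineT_add_smul_sub]
  rcases eq_or_ne j i with rfl | hj
  · simp only [pderiv'_comp_affineTinv_self hc, intervalIntegral.integral_const_mul, affineT_self]
    field_simp
    ring
  · simp only [pderiv'_comp_affineTinv_of_ne hj hc, affineT_of_ne hj]

/-- **Affine scale invariance of Integrated Gradients**: for any index `i`, constants
`c ≠ 0` and `d`, and `T(x) = (x_1, ..., c·x_i + d, ..., x_n)`, whenever
`x̄, x', T(x̄), T(x') ∈ [a,b]` and `F` is continuously differentiable on `[a,b]`, one has
`IG(x̄, x', F) = IG(T(x̄), T(x'), F ∘ T⁻¹)`. -/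
theorem IG_ASI {n : ℕ} (a b : Fin n → ℝ) (F : (Fin n → ℝ) → ℝ)
    (hF : ContDiffOn ℝ 1 F (Set.uIcc a b))
    (i : Fin n) (c d : ℝ) (hc : c ≠ 0)
    (xbar x' : Fin n → ℝ)
    (hxbar : xbar ∈ Set.uIcc a b) (hx' : x' ∈ Set.uIcc a b)
    (hTxbar : affineT i c d xbar ∈ Set.uIcc a b) (hTx' : affineT i c d x' ∈ Set.uIcc a b) :
    IG xbar x' F = IG (affineT i c d xbar) (affineT i c d x') (F ∘ affineTinv i c d) :=
  IG_ASI_general F i c d hc xbar x'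
end

section
/- The Integrated Gradients method satisfies proportionality: if F : [a,b] → ℝ has the form F(x) = G(∑_{j=1}^n x_j) for a continuously differentiable G : ℝ → ℝ, and 0 ∈ [a,b], then for every x̄ ∈ [a,b] and every i, IG_i(x̄, 0, F) = c·x̄_i where c = ∫₀¹ G'(t·∑_j x̄_j) dt; in particular each attribution is proportional to x̄_i. -/
open MeasureTheory

theorem sum_update_eq_sum_add {ι : Type*} [Fintype ι] [DecidableEq ι]
    (x : ι → ℝ) (i : ι) (s : ℝ) :
    ∑ j, Function.update x i s j = ∑ j, x j + (s - x i) := by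
  rw [← Finset.add_sum_erase _ _ (Finset.mem_univ i),
    ← Finset.add_sum_erase _ _ (Finset.mem_univ i), Function.update_self,
    Finset.sum_congr rfl fun j hj => Function.update_of_ne (Finset.ne_of_mem_erase hj) s x]
  ring

theorem hasDerivAt_sum_update {ι : Type*} [Fintype ι] [DecidableEq ι]
    (x : ι → ℝ) (i : ι) : HasDerivAt (fun s => ∑ j, Function.update x i s j) 1 (x i) := by
  simp only [sum_update_eq_sum_add]
  simpa using ((hasDerivAt_id (x i)).sub_const (x i)).const_add (∑ j, x j)

theorem pderiv'_comp_sum {n : ℕ} {G : ℝ → ℝ} (x : Fin n → ℝ)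
    (hG : DifferentiableAt ℝ G (∑ j, x j)) (i : Fin n) :
    pderiv' (fun y => G (∑ j, y j)) i x = deriv G (∑ j, x j) := by
  have hG' : HasDerivAt G (deriv G (∑ j, x j)) (∑ j, Function.update x i (x i) j) := by
    rw [Function.update_eq_self]
    exact hG.hasDerivAt
  exact (hG'.comp (x i) (hasDerivAt_sum_update x i)).deriv.trans (mul_one _)

theorem IG_proportionality_general {n : ℕ}
    (G : ℝ → ℝ) (hG : ContDiff ℝ 1 G)
    (F : (Fin n → ℝ) → ℝ) (hF : ∀ x, F x = G (∑ j, x j))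
    (xbar : Fin n → ℝ) (i : Fin n) :
    IG xbar 0 F i = (∫ t in (0:ℝ)..1, deriv G (t * ∑ j, xbar j)) * xbar i := by
  obtain rfl : F = fun x => G (∑ j, x j) := funext hF
  have hpath : ∀ t : ℝ, pderiv' (fun x => G (∑ j, x j)) i (t • xbar)
      = deriv G (t * ∑ j, xbar j) := fun t => by
    rw [pderiv'_comp_sum _ (hG.differentiable one_ne_zero _)]
    simp [Finset.mul_sum]
  simp only [IG, sub_zero, zero_add, Pi.zero_apply, hpath]
  ring

/-- **Proportionality of Integrated Gradients**: if `F(x) = G(∑_j x_j)` for a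
continuously differentiable `G : ℝ → ℝ`, and `0 ∈ [a,b]`, then for every `x̄ ∈ [a,b]`
and every `i`, `IG_i(x̄, 0, F) = c·x̄_i` where `c = ∫₀¹ G'(t·∑_j x̄_j) dt`. -/
theorem IG_proportionality {n : ℕ} (a b : Fin n → ℝ)
    (G : ℝ → ℝ) (hG : ContDiff ℝ 1 G)
    (F : (Fin n → ℝ) → ℝ) (hF : ∀ x, F x = G (∑ j, x j))
    (h0 : (0 : Fin n → ℝ) ∈ Set.uIcc a b)
    (xbar : Fin n → ℝ) (hxbar : xbar ∈ Set.uIcc a b) (i : Fin n) :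
    IG xbar 0 F i = (∫ t in (0:ℝ)..1, deriv G (t * ∑ j, xbar j)) * xbar i :=
  IG_proportionality_general G hG F hF xbar i
end

section
/- For any multi-index m ∈ ℕ₀ⁿ with m_i ≠ 0, any baseline x' and input x̄ in [a,b], the Integrated Gradients attribution of the monomial F(x) = [x − x']^m := ∏_{k=1}^n (x_k − x'_k)^{m_k} satisfies IG_i(x̄, x', [x − x']^m) = (m_i / ‖m‖₁) · [x̄ − x']^m, where ‖m‖₁ = ∑_k m_k. If m_i = 0 then IG_i(x̄, x', [x − x']^m) = 0. -/
open MeasureTheory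

lemma pderiv_monomial {n : ℕ} (m : Fin n → ℕ) (x' y : Fin n → ℝ) (i : Fin n) :
    pderiv' (fun x => ∏ k, (x k - x' k) ^ m k) i y
      = (m i : ℝ) * (y i - x' i) ^ (m i - 1) *
          ∏ k ∈ Finset.univ.erase i, (y k - x' k) ^ m k := by
  unfold pderiv'
  have hfun : (fun t => ∏ k, (Function.update y i t k - x' k) ^ m k)
      = fun t => (t - x' i) ^ m i * ∏ k ∈ Finset.univ.erase i, (y k - x' k) ^ m k := by
    funext t
    rw [← Finset.mul_prod_erase Finset.univ _ (Finset.mem_univ i)]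
    simp only [Function.update_self]
    congr 1
    apply Finset.prod_congr rfl
    intro k hk
    rw [Function.update_of_ne (Finset.ne_of_mem_erase hk)]
  rw [hfun]
  have h : HasDerivAt (fun t : ℝ => (t - x' i) ^ m i *
      ∏ k ∈ Finset.univ.erase i, (y k - x' k) ^ m k)
      ((m i : ℝ) * (y i - x' i) ^ (m i - 1) * 1 *
        ∏ k ∈ Finset.univ.erase i, (y k - x' k) ^ m k) (y i) :=
    (((hasDerivAt_id (y i)).sub_const (x' i)).pow (m i)).mul_const _
  rw [h.deriv]; ring

/-- **Integrated Gradients on monomials**: for `m ∈ ℕ₀ⁿ` and the monomial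
`F(x) = ∏_k (x_k − x'_k)^{m_k}`, if `m_i ≠ 0` then
`IG_i(x̄, x', F) = (m_i/‖m‖₁)·∏_k (x̄_k − x'_k)^{m_k}`, and if `m_i = 0` then
`IG_i(x̄, x', F) = 0`. -/
theorem IG_monomial {n : ℕ} (a b : Fin n → ℝ) (m : Fin n → ℕ)
    (xbar x' : Fin n → ℝ) (hxbar : xbar ∈ Set.uIcc a b) (hx' : x' ∈ Set.uIcc a b)
    (i : Fin n) :
    (m i ≠ 0 →
      IG xbar x' (fun x => ∏ k, (x k - x' k) ^ m k) i
        = ((m i : ℝ) / ∑ k, (m k : ℝ)) * ∏ k, (xbar k - x' k) ^ m k) ∧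
    (m i = 0 → IG xbar x' (fun x => ∏ k, (x k - x' k) ^ m k) i = 0) := by
  set d : Fin n → ℝ := fun k => xbar k - x' k with hd
  have hpath : ∀ (t : ℝ) (k : Fin n), (x' + t • (xbar - x')) k - x' k = t * d k := by
    intro t k
    simp only [hd, Pi.add_apply, Pi.smul_apply, Pi.sub_apply, smul_eq_mul]
    ring
  constructor
  · intro hmi
    set M : ℕ := ∑ k, m k with hM
    have hMi : m i ≤ M := Finset.single_le_sum (fun k _ => Nat.zero_le (m k)) (Finset.mem_univ i)
    have hMpos : 0 < M := lt_of_lt_of_le (Nat.pos_of_ne_zero hmi) hMi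
    set c : ℝ := (m i : ℝ) * d i ^ (m i - 1) * ∏ k ∈ Finset.univ.erase i, d k ^ m k with hc
    have hint : (fun t : ℝ => pderiv' (fun x => ∏ k, (x k - x' k) ^ m k) i (x' + t • (xbar - x')))
        = fun t => c * t ^ (M - 1) := by
      funext t
      rw [pderiv_monomial]
      simp only [hpath]
      rw [hc]
      have h1 : ∀ k, (t * d k) ^ m k = t ^ m k * d k ^ m k := fun k => mul_pow _ _ _
      simp only [h1, mul_pow, Finset.prod_mul_distrib, ← Finset.prod_pow_eq_pow_sum]
      have hE : m i - 1 + ∑ k ∈ Finset.univ.erase i, m k = M - 1 := by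
        have : m i + ∑ k ∈ Finset.univ.erase i, m k = M := by
          rw [hM, Finset.add_sum_erase Finset.univ m (Finset.mem_univ i)]
        omega
      rw [Finset.prod_pow_eq_pow_sum, ← hE, pow_add]
      ring
    unfold IG
    rw [hint, intervalIntegral.integral_const_mul, integral_pow]
    have hM1 : (M - 1 + 1 : ℕ) = M := Nat.succ_pred_eq_of_pos hMpos
    have hdi : d i * d i ^ (m i - 1) = d i ^ m i := by
      rw [← pow_succ']
      congr 1
      omega
    have hprod : ∏ k, d k ^ m k = d i ^ m i * ∏ k ∈ Finset.univ.erase i, d k ^ m k :=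
      (Finset.mul_prod_erase Finset.univ _ (Finset.mem_univ i)).symm
    have hMsum : ((M : ℝ)) = ∑ k, (m k : ℝ) := by rw [hM]; push_cast; ring
    have hMne : (M : ℝ) ≠ 0 := Nat.cast_ne_zero.mpr hMpos.ne'
    have hcast : ((M - 1 : ℕ) : ℝ) + 1 = (M : ℝ) := by exact_mod_cast congrArg (fun x : ℕ => (x:ℝ)) hM1
    rw [hcast, hM1, zero_pow hMpos.ne', one_pow, hprod, ← hMsum, hc]
    field_simp
    rw [← hdi]; ring
  · intro hmi
    have hint : (fun t : ℝ => pderiv' (fun x => ∏ k, (x k - x' k) ^ m k) i (x' + t • (xbar - x')))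
        = fun _ => (0:ℝ) := by
      funext t
      rw [pderiv_monomial]
      simp [hmi]
    unfold IG
    rw [hint]
    simp
end

section
/- Let F be a feed-forward neural network in F²(a,b), i.e. a finite composition F = S^m ∘ F^m ∘ ... ∘ S¹ ∘ F¹ where each F^k : ℝ^{n_{k−1}} → ℝ^{n_k} is real analytic and each S^k applies, to each component independently, either the identity or the ReLU function. Then the hyperrectangle [x̄, x'] can be partitioned into a nonempty set U and its boundary ∂U, where F is real analytic on U, U is open with respect to the usual topology of the dimension of [x̄, x'], and ∂U has Lebesgue measure 0. -/
open MeasureTheory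

/-- A feed-forward neural network architecture from `ℝ^k` to `ℝ^r`: a finite
composition `S^m ∘ F^m ∘ ... ∘ S¹ ∘ F¹`, where each `F^j` is an arbitrary (layer)
function and each `S^j` applies, to each component independently (as recorded by a
Boolean vector), either the identity or the ReLU function. -/
inductive NN : ℕ → ℕ → Type where
  | input (k : ℕ) : NN k k
  | layer {k l r : ℕ} (prev : NN k l) (F : (Fin l → ℝ) → (Fin r → ℝ)) (s : Fin r → Bool) :
      NN k r

/-- Evaluation of a network: each layer applies `F` and then, componentwise,
either ReLU (`max · 0`) or the identity. -/
noncomputable def NN.eval : {k r : ℕ} → NN k r → (Fin k → ℝ) → Fin r → ℝ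
  | _, _, .input _, x => x
  | _, _, .layer prev F s, x => fun i =>
      if s i then max (F (NN.eval prev x) i) 0 else F (NN.eval prev x) i

/-- All layer functions of the network are real analytic (on all of `ℝ^l`). -/
def NN.IsAnalytic : {k r : ℕ} → NN k r → Prop
  | _, _, .input _ => True
  | _, _, .layer prev F _ =>
      prev.IsAnalytic ∧ ∀ i, AnalyticOnNhd ℝ (fun x => F x i) Set.univ

/-!
Away from a null set every layer of the network is analytic. If `h` is analytic on an open
set `W`, then `max h 0` is analytic near every point where `h ≠ 0` or where `h` vanishes
identically, and the remaining zeros of `h` form a null set: at such a zero some iterated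
partial derivative of `h` is nonzero, and one of minimal order is `∂ᵢ ∂^r h` with
`∂^r h = 0` there; on every line in direction `i` these points are isolated zeros of
`∂^r h`, hence countably many, so by Fubini they are Lebesgue-null. Induction over the layers
gives an open set of full measure on which the network is analytic.

The box `[x̄, x']` is the isometric image of a full-dimensional box in `ℝ^D`, `D` being the
coordinates in which `x̄` and `x'` differ, and on `ℝ^D` the `|D|`-dimensional Hausdorff
measure is Lebesgue measure; `U` is the part of the box lying over that open set.
-/

open Set Filter Topology

theorem countable_setOf_eq_zero_and_deriv_ne_zero {E : Type*} [NormedAddCommGroup E]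
    [NormedSpace ℝ E] (φ : ℝ → E) :
    {t | φ t = 0 ∧ deriv φ t ≠ 0}.Countable := by
  refine (HereditarilyLindelofSpace.isLindelof _).countable_of_isDiscrete <|
    isDiscrete_iff_nhdsNE.2 fun t ht => inf_principal_eq_bot.2 ?_
  filter_upwards [(differentiableAt_of_deriv_ne_zero ht.2).hasDerivAt.eventually_ne ht.2]
    with s hs hsT using hs hsT.1

theorem volume_eq_zero_of_countable_update {ι : Type*} [Fintype ι] [DecidableEq ι]
    {S : Set (ι → ℝ)} (hS : MeasurableSet S) (i : ι)
    (h : ∀ x, {t | Function.update x i t ∈ S}.Countable) : volume S = 0 := by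
  have hind : Measurable (S.indicator (1 : (ι → ℝ) → ENNReal)) := measurable_one.indicator hS
  have hslice : ∀ x, ∫⁻ t, S.indicator 1 (Function.update x i t) = 0 := fun x => by
    rw [← (h x).measure_zero volume]
    exact lintegral_indicator_one (measurable_update x hS)
  have hfubini := congrFun (lmarginal_erase' (μ := fun _ : ι => (volume : Measure ℝ)) _ hind
    (Finset.mem_univ i)) 0
  simp only [lmarginal_univ, hslice] at hfubini
  rw [← lintegral_indicator_one hS, volume_pi, hfubini]
  simp [lmarginal]

theorem AnalyticAt.eventually_eq_zero_of_iteratedFDeriv_eq_zero {𝕜 E F : Type*} [RCLike 𝕜]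
    [NormedAddCommGroup E] [NormedSpace 𝕜 E] [NormedAddCommGroup F] [NormedSpace 𝕜 F]
    [CompleteSpace F] {f : E → F} {x : E} (hf : AnalyticAt 𝕜 f x)
    (h : ∀ n, iteratedFDeriv 𝕜 n f x = 0) : f =ᶠ[𝓝 x] 0 := by
  obtain ⟨p, r, hp⟩ := hf
  filter_upwards [hp.eventually_hasSum_sub] with y hy
  have hp0 : (fun n => p n fun _ => y - x) = 0 := funext fun n => by
    have := hp.factorial_smul (y - x) n
    rw [h n, zero_apply, ← Nat.cast_smul_eq_nsmul 𝕜] at this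
    exact (smul_eq_zero.1 this).resolve_left (Nat.cast_ne_zero.2 n.factorial_ne_zero)
  exact hy.unique (hp0 ▸ hasSum_zero)

section IteratedPartialDeriv

variable {ι : Type*} [Fintype ι] [DecidableEq ι] {W : Set (ι → ℝ)} {g : (ι → ℝ) → ℝ} {m : ℕ}

noncomputable def iteratedPartialDeriv (r : Fin m → ι) (g : (ι → ℝ) → ℝ) (x : ι → ℝ) : ℝ :=
  iteratedFDeriv ℝ m g x fun j => Pi.single (r j) 1

theorem fderiv_iteratedPartialDeriv {r : Fin m → ι} {x : ι → ℝ}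
    (h : DifferentiableAt ℝ (iteratedFDeriv ℝ m g) x) (i : ι) :
    fderiv ℝ (iteratedPartialDeriv r g) x (Pi.single i 1) =
      iteratedPartialDeriv (Fin.cons i r) g x := by
  rw [iteratedPartialDeriv, iteratedFDeriv_succ_apply_left]
  unfold iteratedPartialDeriv
  rw [fderiv_continuousMultilinear_apply_const_apply h]
  rfl

theorem analyticOnNhd_iteratedPartialDeriv (hg : AnalyticOnNhd ℝ g W) (r : Fin m → ι) :
    AnalyticOnNhd ℝ (iteratedPartialDeriv r g) W :=
  (ContinuousMultilinearMap.apply ℝ (fun _ : Fin m => ι → ℝ) ℝ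
    fun j => Pi.single (r j) 1).comp_analyticOnNhd (hg.iteratedFDeriv m)

theorem exists_iteratedPartialDeriv_ne_zero {x : ι → ℝ} (h : iteratedFDeriv ℝ m g x ≠ 0) :
    ∃ r : Fin m → ι, iteratedPartialDeriv r g x ≠ 0 := by
  by_contra! hr
  refine h (ContinuousMultilinearMap.toMultilinearMap_injective
    (Module.Basis.ext_multilinear (fun _ => Pi.basisFun ℝ ι) fun r => ?_))
  simpa [iteratedPartialDeriv] using hr r

end IteratedPartialDeriv

namespace AnalyticOnNhd

variable {ι : Type*} [Fintype ι] [DecidableEq ι] {W : Set (ι → ℝ)} {g h : (ι → ℝ) → ℝ}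

theorem volume_setOf_eq_zero_and_fderiv_ne_zero (hW : IsOpen W) (hg : AnalyticOnNhd ℝ g W)
    (i : ι) : volume {x | x ∈ W ∧ g x = 0 ∧ fderiv ℝ g x (Pi.single i 1) ≠ 0} = 0 := by
  set dg := fun x => fderiv ℝ g x (Pi.single i 1)
  have hdg : ContinuousOn dg W :=
    ((ContinuousLinearMap.apply ℝ ℝ (Pi.single i 1 : ι → ℝ)).comp_analyticOnNhd
      hg.fderiv).continuousOn
  have hmeas : MeasurableSet {x | x ∈ W ∧ g x = 0 ∧ dg x ≠ 0} := by
    have hdg0 := hdg.isOpen_inter_preimage hW (isOpen_compl_singleton (x := (0 : ℝ)))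
    have hg0 := hg.continuousOn.isOpen_inter_preimage hW (isOpen_compl_singleton (x := (0 : ℝ)))
    convert hdg0.measurableSet.diff hg0.measurableSet using 1
    ext x
    simp only [mem_ofPred_eq, Set.mem_sdiff, mem_inter_iff, mem_preimage, mem_compl_iff,
      mem_singleton_iff]
    tauto
  refine volume_eq_zero_of_countable_update hmeas i fun x => ?_
  refine (countable_setOf_eq_zero_and_deriv_ne_zero fun t => g (Function.update x i t)).mono ?_
  rintro t ⟨hW, hg0, hdg0⟩
  have hderiv : HasDerivAt (fun t => g (Function.update x i t)) (dg (Function.update x i t)) t :=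
    (hg _ hW).differentiableAt.hasFDerivAt.comp_hasDerivAt t (hasDerivAt_update x i t)
  exact ⟨hg0, hderiv.deriv ▸ hdg0⟩

theorem exists_iteratedPartialDeriv_eq_zero_and_fderiv_ne_zero (hg : AnalyticOnNhd ℝ g W)
    {x : ι → ℝ} (hx : x ∈ W) (hgx : g x = 0) (hflat : ¬ g =ᶠ[𝓝 x] 0) :
    ∃ (m : ℕ) (r : Fin m → ι) (i : ι), iteratedPartialDeriv r g x = 0 ∧
      fderiv ℝ (iteratedPartialDeriv r g) x (Pi.single i 1) ≠ 0 := by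
  classical
  have hex : ∃ n, iteratedFDeriv ℝ n g x ≠ 0 := by
    by_contra! h
    exact hflat ((hg x hx).eventually_eq_zero_of_iteratedFDeriv_eq_zero h)
  have h0 : iteratedFDeriv ℝ 0 g x = 0 := by
    rw [← norm_eq_zero, norm_iteratedFDeriv_zero, hgx, norm_zero]
  obtain ⟨m, hm⟩ : ∃ m, Nat.find hex = m + 1 :=
    Nat.exists_eq_succ_of_ne_zero fun h => Nat.find_spec hex (by rwa [h])
  have hprev : iteratedFDeriv ℝ m g x = 0 := not_not.1 (Nat.find_min hex (by omega))
  have hnext : iteratedFDeriv ℝ (m + 1) g x ≠ 0 := hm ▸ Nat.find_spec hex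
  obtain ⟨r, hr⟩ := exists_iteratedPartialDeriv_ne_zero hnext
  refine ⟨m, Fin.tail r, r 0, by simp [iteratedPartialDeriv, hprev], ?_⟩
  rwa [fderiv_iteratedPartialDeriv ((hg.iteratedFDeriv m x hx).differentiableAt),
    Fin.cons_self_tail]

theorem ae_eventually_eq_zero_of_eq_zero (hW : IsOpen W) (hg : AnalyticOnNhd ℝ g W) :
    ∀ᵐ x, x ∈ W → g x = 0 → g =ᶠ[𝓝 x] 0 := by
  rw [ae_iff]
  refine measure_mono_null (fun x hx => ?_) (measure_iUnion_null fun q : (Σ m, Fin m → ι) × ι =>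
    (analyticOnNhd_iteratedPartialDeriv hg q.1.2).volume_setOf_eq_zero_and_fderiv_ne_zero hW q.2)
  simp only [mem_ofPred_eq, Classical.not_imp] at hx
  obtain ⟨m, r, i, hr, hi⟩ :=
    hg.exists_iteratedPartialDeriv_eq_zero_and_fderiv_ne_zero hx.1 hx.2.1 hx.2.2
  exact mem_iUnion.2 ⟨(⟨m, r⟩, i), hx.1, hr, hi⟩

theorem exists_isOpen_ae_analyticOnNhd_max_zero (hW : IsOpen W) (hh : AnalyticOnNhd ℝ h W) :
    ∃ V, IsOpen V ∧ (∀ᵐ x, x ∈ W → x ∈ V) ∧ AnalyticOnNhd ℝ (fun x => max (h x) 0) V := by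
  refine ⟨(W ∩ h ⁻¹' {0}ᶜ) ∪ {x | h =ᶠ[𝓝 x] 0},
    (hh.continuousOn.isOpen_inter_preimage hW isOpen_compl_singleton).union
      isOpen_setOfPred_eventually_nhds, ?_, ?_⟩
  · filter_upwards [hh.ae_eventually_eq_zero_of_eq_zero hW] with x hflat hxW
    by_cases h0 : h x = 0
    · exact Or.inr (hflat hxW h0)
    · exact Or.inl ⟨hxW, h0⟩
  · rintro x (⟨hxW, hx0⟩ | hflat)
    · rcases lt_or_gt_of_ne (hx0 : h x ≠ 0) with hneg | hpos
      · refine (analyticAt_const (v := (0 : ℝ))).congr ?_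
        filter_upwards [(hh x hxW).continuousAt.eventually_lt_const hneg] with y hy
        exact (max_eq_right hy.le).symm
      · refine (hh x hxW).congr ?_
        filter_upwards [(hh x hxW).continuousAt.eventually_const_lt hpos] with y hy
        exact (max_eq_left hy.le).symm
    · refine (analyticAt_const (v := (0 : ℝ))).congr ?_
      filter_upwards [hflat] with y hy
      simp [hy]

theorem exists_isOpen_ae_analyticOnNhd_ite_max_zero (hW : IsOpen W) (hh : AnalyticOnNhd ℝ h W)
    (b : Bool) : ∃ V, IsOpen V ∧ (∀ᵐ x, x ∈ W → x ∈ V) ∧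
      AnalyticOnNhd ℝ (fun x => if b then max (h x) 0 else h x) V := by
  cases b
  · exact ⟨W, hW, ae_of_all _ fun _ => id, by simpa using hh⟩
  · simpa using hh.exists_isOpen_ae_analyticOnNhd_max_zero hW

end AnalyticOnNhd

theorem NN.IsAnalytic.exists_isOpen_ae_analyticOnNhd_eval_comp {ι : Type*} [Fintype ι]
    [DecidableEq ι] {k r : ℕ} {net : NN k r} (hnet : net.IsAnalytic)
    {ψ : (ι → ℝ) → (Fin k → ℝ)} (hψ : AnalyticOnNhd ℝ ψ univ) :
    ∃ V, IsOpen V ∧ (∀ᵐ x, x ∈ V) ∧ AnalyticOnNhd ℝ (fun x => net.eval (ψ x)) V := by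
  induction net with
  | input => exact ⟨univ, isOpen_univ, ae_of_all _ mem_univ, by simpa [NN.eval] using hψ⟩
  | layer prev F s ih =>
    rw [NN.IsAnalytic] at hnet
    obtain ⟨hprev, hF⟩ := hnet
    obtain ⟨V, hVo, hVae, hV⟩ := ih hprev
    choose V' hV'o hV'ae hV' using fun i =>
      ((hF i).comp hV (mapsTo_univ _ _)).exists_isOpen_ae_analyticOnNhd_ite_max_zero hVo (s i)
    refine ⟨⋂ i, V' i, isOpen_iInter_of_finite hV'o, ?_,
      analyticOnNhd_pi_iff.2 fun i => by simpa [NN.eval] using (hV' i).mono (iInter_subset _ i)⟩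
    filter_upwards [hVae, ae_all_iff.2 hV'ae] with x hx hx' using mem_iInter.2 fun i => hx' i hx

section UpdateFinset

open Function

variable {ι : Type*}

theorem volume_uIcc_pos [Fintype ι] {a b : ι → ℝ} (h : ∀ i, a i ≠ b i) :
    0 < volume (uIcc a b) := by
  rw [← pi_univ_uIcc, volume_pi_pi, pos_iff_ne_zero, Finset.prod_ne_zero_iff]
  intro i _
  rw [Real.volume_interval, ENNReal.ofReal_ne_zero_iff]
  exact abs_pos.2 (sub_ne_zero.2 (h i).symm)

theorem analyticOnNhd_restrict [Fintype ι] {𝕜 E : Type*} [NontriviallyNormedField 𝕜]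
    [NormedAddCommGroup E] [NormedSpace 𝕜 E] (D : Finset ι) :
    AnalyticOnNhd 𝕜 (D.restrict : (ι → E) → (D → E)) univ :=
  (ContinuousLinearMap.pi fun j : D =>
    ContinuousLinearMap.proj (R := 𝕜) (φ := fun _ : ι => E) j.1).analyticOnNhd univ

variable [DecidableEq ι]

theorem isometry_updateFinset [Fintype ι] {π : ι → Type*} [∀ i, PseudoMetricSpace (π i)]
    (c : ∀ i, π i) (D : Finset ι) : Isometry (updateFinset c D) := by
  refine Isometry.of_dist_eq fun z z' => le_antisymm
    ((dist_pi_le_iff dist_nonneg).2 fun i => ?_) ((dist_pi_le_iff dist_nonneg).2 fun j => ?_)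
  · by_cases hi : i ∈ D
    · simpa [updateFinset, hi] using dist_le_pi_dist z z' ⟨i, hi⟩
    · simp [updateFinset, hi]
  · simpa [updateFinset, j.2] using dist_le_pi_dist (updateFinset c D z) (updateFinset c D z') j

theorem analyticOnNhd_updateFinset [Fintype ι] {𝕜 E : Type*} [NontriviallyNormedField 𝕜]
    [NormedAddCommGroup E] [NormedSpace 𝕜 E] (c : ι → E) (D : Finset ι) :
    AnalyticOnNhd 𝕜 (updateFinset c D) univ :=
  analyticOnNhd_pi_iff.2 fun i => by
    by_cases hi : i ∈ D
    · simp only [updateFinset, hi, dite_true]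
      exact (ContinuousLinearMap.proj (R := 𝕜) (φ := fun _ : D => E) ⟨i, hi⟩).analyticOnNhd univ
    · simpa [updateFinset, hi] using analyticOnNhd_const

variable {c c' x : ι → ℝ} {D : Finset ι}

theorem updateFinset_restrict_of_mem_uIcc (hD : ∀ i ∉ D, c i = c' i) (hx : x ∈ uIcc c c') :
    updateFinset c D (D.restrict x) = x := by
  funext i
  rw [← pi_univ_uIcc, mem_univ_pi] at hx
  by_cases hi : i ∈ D
  · simp [updateFinset, hi]
  · have hxi := hx i
    rw [← hD i hi, uIcc_self, mem_singleton_iff] at hxi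
    simp [updateFinset, hi, hxi]

theorem updateFinset_mem_uIcc {z : D → ℝ} (hz : z ∈ uIcc (D.restrict c) (D.restrict c')) :
    updateFinset c D z ∈ uIcc c c' := by
  rw [← pi_univ_uIcc, mem_univ_pi] at hz ⊢
  intro i
  by_cases hi : i ∈ D
  · simpa [updateFinset, hi] using hz ⟨i, hi⟩
  · simp [updateFinset, hi]

end UpdateFinset

/-- **Topology of ReLU networks (Lemma 2 of Lundstrom et al.)**: for a feed-forward
network `F ∈ F²(a,b)` (real analytic layers interleaved with componentwise
identity/ReLU), the hyperrectangle `[x̄, x']` can be partitioned into a nonempty set `U`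
and its complement `∂U = [x̄,x'] \ U`, where `F` is real analytic on `U`, `U` is
relatively open in `[x̄, x']` (the topology of the dimension of `[x̄, x']`), and `∂U`
has measure `0` with respect to the Hausdorff measure of the dimension of `[x̄, x']`
(the number of coordinates in which `x̄` and `x'` differ). -/
theorem relu_network_topology {n : ℕ} (a b : Fin n → ℝ)
    (net : NN n 1) (hnet : net.IsAnalytic)
    (F : (Fin n → ℝ) → ℝ) (hF : ∀ x ∈ Set.uIcc a b, F x = net.eval x 0)
    (xbar x' : Fin n → ℝ) (hxbar : xbar ∈ Set.uIcc a b) (hx' : x' ∈ Set.uIcc a b) :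
    ∃ U : Set (Fin n → ℝ),
      U ⊆ Set.uIcc xbar x' ∧ U.Nonempty ∧
      (∃ V : Set (Fin n → ℝ), IsOpen V ∧ U = V ∩ Set.uIcc xbar x') ∧
      AnalyticOn ℝ F U ∧
      μH[((Finset.univ.filter fun i => xbar i ≠ x' i).card : ℝ)]
        (Set.uIcc xbar x' \ U) = 0 := by
  set D := Finset.univ.filter fun i => xbar i ≠ x' i
  have hD : ∀ i ∉ D, xbar i = x' i := fun i hi => by simpa [D] using hi
  obtain ⟨V, hVo, hVae, hV⟩ :=
    hnet.exists_isOpen_ae_analyticOnNhd_eval_comp (analyticOnNhd_updateFinset (𝕜 := ℝ) xbar D)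
  obtain ⟨z, hzQ, hzV⟩ : (uIcc (D.restrict xbar) (D.restrict x') ∩ V).Nonempty :=
    nonempty_of_measure_ne_zero <| by
      rw [measure_inter_conull (ae_iff.1 hVae)]
      exact (volume_uIcc_pos fun j : D => (Finset.mem_filter.1 j.2).2).ne'
  refine ⟨D.restrict ⁻¹' V ∩ uIcc xbar x', inter_subset_right,
    ⟨Function.updateFinset xbar D z, by rwa [mem_preimage, Function.restrict_updateFinset],
      updateFinset_mem_uIcc hzQ⟩, ⟨_, hVo.preimage (Finset.continuous_restrict D), rfl⟩, ?_, ?_⟩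
  · have hG := (analyticOnNhd_pi_iff.1 hV 0).comp ((analyticOnNhd_restrict D).mono
      (subset_univ _)) (mapsTo_preimage _ _)
    refine (hG.analyticOn.mono inter_subset_left).congr fun x hx => ?_
    simp only [Function.comp_apply, updateFinset_restrict_of_mem_uIcc hD hx.2]
    exact hF x (uIcc_subset_uIcc hxbar hx' hx.2)
  · refine measure_mono_null (t := Function.updateFinset xbar D '' Vᶜ) (fun x hx =>
      ⟨D.restrict x, fun hxV => hx.2 ⟨hxV, hx.1⟩, updateFinset_restrict_of_mem_uIcc hD hx.1⟩) ?_
    rw [(isometry_updateFinset xbar D).hausdorffMeasure_image (Or.inl (Nat.cast_nonneg _)),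
      ← Fintype.card_coe D, hausdorffMeasure_pi_real]
    exact ae_iff.1 hVae
end

section
/- Let A be a baseline attribution method on real analytic functions on [a,b] satisfying completeness, dummy, linearity, and symmetric monotonicity. Then A agrees with the Integrated Gradients method on all monomials: for every x̄, x' ∈ [a,b] and every multi-index m ∈ ℕ₀ⁿ, A(x̄, x', [x − x']^m) = IG(x̄, x', [x − x']^m), whose i-th component equals (m_i/‖m‖₁)·[x̄ − x']^m when m ≠ 0 and 0 when m = 0. -/
open MeasureTheory

/-- A baseline attribution method on `ℝⁿ`. -/
abbrev BAM (n : ℕ) : Type :=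
  (Fin n → ℝ) → (Fin n → ℝ) → ((Fin n → ℝ) → ℝ) → (Fin n → ℝ)

/-- The monomial `[x − x']^m = ∏_k (x_k − x'_k)^{m_k}`. -/
def monomial {n : ℕ} (x' : Fin n → ℝ) (m : Fin n → ℕ) (x : Fin n → ℝ) : ℝ :=
  ∏ k, (x k - x' k) ^ m k

/-- `F` does not vary in its `i`-th input. -/
def DoesNotVary {n : ℕ} (F : (Fin n → ℝ) → ℝ) (i : Fin n) : Prop :=
  ∀ x : Fin n → ℝ, ∀ t : ℝ, F (Function.update x i t) = F x

/-- Completeness on real analytic functions. -/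
def Completeness {n : ℕ} (a b : Fin n → ℝ) (A : BAM n) : Prop :=
  ∀ xbar ∈ Set.uIcc a b, ∀ x' ∈ Set.uIcc a b, ∀ F : (Fin n → ℝ) → ℝ,
    AnalyticOnNhd ℝ F (Set.uIcc a b) → ∑ i, A xbar x' F i = F xbar - F x'

/-- Dummy on real analytic functions. -/
def Dummy {n : ℕ} (a b : Fin n → ℝ) (A : BAM n) : Prop :=
  ∀ xbar ∈ Set.uIcc a b, ∀ x' ∈ Set.uIcc a b, ∀ F : (Fin n → ℝ) → ℝ,
    AnalyticOnNhd ℝ F (Set.uIcc a b) → ∀ i, DoesNotVary F i → A xbar x' F i = 0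

/-- Linearity on real analytic functions. -/
def Linearity {n : ℕ} (a b : Fin n → ℝ) (A : BAM n) : Prop :=
  ∀ xbar ∈ Set.uIcc a b, ∀ x' ∈ Set.uIcc a b, ∀ F G : (Fin n → ℝ) → ℝ,
    AnalyticOnNhd ℝ F (Set.uIcc a b) → AnalyticOnNhd ℝ G (Set.uIcc a b) → ∀ α β : ℝ,
      A xbar x' (fun x => α * F x + β * G x) = α • A xbar x' F + β • A xbar x' G

/-- Symmetric monotonicity on real analytic functions. -/
def SymmetricMonotonicity {n : ℕ} (a b : Fin n → ℝ) (A : BAM n) : Prop :=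
  ∀ xbar ∈ Set.uIcc a b, ∀ x' ∈ Set.uIcc a b, ∀ F G : (Fin n → ℝ) → ℝ,
    AnalyticOnNhd ℝ F (Set.uIcc a b) → AnalyticOnNhd ℝ G (Set.uIcc a b) →
    (∀ i j : Fin n, xbar i ≠ x' i → xbar j ≠ x' j →
      (∀ x ∈ Set.uIcc xbar x', pderiv' F i x ≤ pderiv' G j x) →
      A xbar x' F i / (xbar i - x' i) ≤ A xbar x' G j / (xbar j - x' j)) ∧
    (∀ i : Fin n, xbar i = x' i → A xbar x' F i = 0)

/-! Since `∂ᵢ [x − x']^(p + eᵢ) = (pᵢ + 1) [x − x']^p` for every `i`, symmetric monotonicity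
(used in both directions) and linearity show that
`Aᵢ([x − x']^(p + eᵢ)) / ((pᵢ + 1)(x̄ᵢ − x'ᵢ))` is the same for all `i` with `x̄ᵢ ≠ x'ᵢ`.
So the attribution of coordinate `k ≠ i` to `[x − x']^m` equals a multiple of the attribution of
`i` to the monomial obtained by moving one unit of exponent from `k` to `i`, and completeness then
determines the `i`-th attribution. Induction on `‖m‖₁ − mᵢ` gives
`Aᵢ([x − x']^m) = (mᵢ/‖m‖₁)[x̄ − x']^m`, which is also the value of Integrated Gradients.
Coordinates with `mᵢ = 0` or `x̄ᵢ = x'ᵢ` are settled directly by dummy and by part (ii) of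
symmetric monotonicity. -/

section Monomial

variable {n : ℕ} (x' : Fin n → ℝ)

theorem analyticOnNhd_monomial (m : Fin n → ℕ) (s : Set (Fin n → ℝ)) :
    AnalyticOnNhd ℝ (monomial x' m) s :=
  Finset.analyticOnNhd_fun_prod _ fun k _ =>
    (((ContinuousLinearMap.proj k : (Fin n → ℝ) →L[ℝ] ℝ).analyticOnNhd s).sub
      analyticOnNhd_const).pow _

theorem monomial_update (m : Fin n → ℕ) (x : Fin n → ℝ) (i : Fin n) (t : ℝ) :
    monomial x' m (Function.update x i t)
      = (t - x' i) ^ m i * monomial x' (Function.update m i 0) x := by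
  simp only [monomial, Fintype.prod_eq_mul_prod_compl i, Function.update_self, pow_zero,
    one_mul]
  congr 1
  refine Finset.prod_congr rfl fun k hk => ?_
  have hki : k ≠ i := by simpa using hk
  simp [Function.update_of_ne hki]

theorem monomial_add_single (p : Fin n → ℕ) (i : Fin n) (x : Fin n → ℝ) :
    monomial x' (p + Pi.single i 1) x = (x i - x' i) * monomial x' p x := by
  simp only [monomial, Pi.add_apply, pow_add, Finset.prod_mul_distrib]
  rw [mul_comm]
  congr 1
  simp [Pi.single_apply, pow_ite]

theorem monomial_eq_zero {m : Fin n → ℕ} {x : Fin n → ℝ} {k : Fin n} (hx : x k = x' k)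
    (hm : m k ≠ 0) : monomial x' m x = 0 :=
  Finset.prod_eq_zero (Finset.mem_univ k) (by rw [hx, sub_self, zero_pow hm])

theorem monomial_add_smul_sub (m : Fin n → ℕ) (t : ℝ) (y : Fin n → ℝ) :
    monomial x' m (x' + t • (y - x')) = t ^ (∑ k, m k) * monomial x' m y := by
  simp [monomial, mul_pow, Finset.prod_mul_distrib, Finset.prod_pow_eq_pow_sum]

theorem doesNotVary_monomial {m : Fin n → ℕ} {i : Fin n} (hm : m i = 0) :
    DoesNotVary (monomial x' m) i := by
  intro x t
  conv_rhs => rw [← Function.update_eq_self i x]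
  rw [monomial_update, monomial_update, hm, pow_zero, pow_zero]

theorem hasDerivAt_monomial_add_single (p : Fin n → ℕ) (i : Fin n) (x : Fin n → ℝ) :
    HasDerivAt (fun t => monomial x' (p + Pi.single i 1) (Function.update x i t))
      ((p i + 1) * monomial x' p x) (x i) := by
  have hrest : Function.update (p + Pi.single i 1) i 0 = Function.update p i 0 := by
    ext k; by_cases hk : k = i <;> simp [hk]
  have hp := monomial_update x' p x i (x i)
  rw [Function.update_eq_self] at hp
  simp only [monomial_update, hrest, hp, Pi.add_apply, Pi.single_eq_same]
  have h := (((hasDerivAt_id' (x i)).sub_const (x' i)).fun_pow (p i + 1)).mul_const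
    (monomial x' (Function.update p i 0) x)
  simp only [add_tsub_cancel_right, mul_one, Nat.cast_add, Nat.cast_one] at h
  rwa [← mul_assoc]

theorem pderiv'_const_mul_monomial_add_single (c : ℝ) (p : Fin n → ℕ) (i : Fin n)
    (x : Fin n → ℝ) :
    pderiv' (fun y => c * monomial x' (p + Pi.single i 1) y) i x
      = c * ((p i + 1) * monomial x' p x) :=
  ((hasDerivAt_monomial_add_single x' p i x).const_mul c).deriv

theorem pderiv'_monomial_add_single (p : Fin n → ℕ) (i : Fin n) (x : Fin n → ℝ) :
    pderiv' (monomial x' (p + Pi.single i 1)) i x = (p i + 1) * monomial x' p x :=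
  (hasDerivAt_monomial_add_single x' p i x).deriv

theorem exists_eq_add_single {m : Fin n → ℕ} {i : Fin n} (hm : m i ≠ 0) :
    ∃ p : Fin n → ℕ, m = p + Pi.single i 1 :=
  ⟨Function.update m i (m i - 1), by ext k; by_cases hk : k = i <;> simp [hk]; omega⟩

theorem sum_add_single (p : Fin n → ℕ) (i : Fin n) :
    ∑ k, (p + Pi.single i 1 : Fin n → ℕ) k = ∑ k, p k + 1 := by
  simp [Finset.sum_add_distrib]

end Monomial

theorem DoesNotVary.pderiv'_eq_zero {n : ℕ} {F : (Fin n → ℝ) → ℝ} {i : Fin n}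
    (hF : DoesNotVary F i) (x : Fin n → ℝ) : pderiv' F i x = 0 := by
  simp only [pderiv', hF x, deriv_const']

theorem eq_of_sum_eq_of_forall_ne {ι M : Type*} [Fintype ι] [DecidableEq ι]
    [AddCancelCommMonoid M] {f g : ι → M} (h : ∑ k, f k = ∑ k, g k) {i : ι}
    (hne : ∀ k ≠ i, f k = g k) : f i = g i := by
  rw [← Finset.add_sum_erase _ _ (Finset.mem_univ i),
    ← Finset.add_sum_erase _ _ (Finset.mem_univ i),
    Finset.sum_congr rfl fun k hk => hne k (Finset.ne_of_mem_erase hk)] at h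
  exact add_right_cancel h

section Share

variable {n : ℕ} (xbar x' : Fin n → ℝ)

/-- `(mᵢ/‖m‖₁)[x̄ − x']^m`; since `0 / 0 = 0` in Lean, it is `0` for `m = 0`. -/
noncomputable def monomialShare (m : Fin n → ℕ) (i : Fin n) : ℝ :=
  (m i / ∑ k, (m k : ℝ)) * monomial x' m xbar

theorem monomialShare_add_single (p : Fin n → ℕ) (i : Fin n) :
    monomialShare xbar x' (p + Pi.single i 1) i
      = monomial x' p xbar / (∑ k, (p k : ℝ) + 1) * ((p i + 1) * (xbar i - x' i)) := by
  have hsum : ∑ k, ((p + Pi.single i 1 : Fin n → ℕ) k : ℝ) = ∑ k, (p k : ℝ) + 1 := by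
    exact_mod_cast sum_add_single p i
  rw [monomialShare, hsum, monomial_add_single]
  simp only [Pi.add_apply, Pi.single_eq_same, Nat.cast_add, Nat.cast_one]
  ring

theorem sum_monomialShare {m : Fin n → ℕ} (hm : m ≠ 0) :
    ∑ i, monomialShare xbar x' m i = monomial x' m xbar := by
  have hpos : (∑ k, (m k : ℝ)) ≠ 0 := by
    obtain ⟨i, hi⟩ := Function.ne_iff.1 hm
    exact_mod_cast (Finset.sum_pos' (fun _ _ => Nat.zero_le _)
      ⟨i, Finset.mem_univ i, Nat.pos_of_ne_zero hi⟩).ne'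
  simp only [monomialShare, ← Finset.sum_mul, ← Finset.sum_div, div_self hpos, one_mul]

theorem IG_monomial_s13 (m : Fin n → ℕ) (i : Fin n) :
    IG xbar x' (monomial x' m) i = monomialShare xbar x' m i := by
  by_cases hmi : m i = 0
  · simp [IG, monomialShare, (doesNotVary_monomial x' hmi).pderiv'_eq_zero, hmi]
  obtain ⟨p, rfl⟩ := exists_eq_add_single hmi
  simp only [IG, pderiv'_monomial_add_single, monomial_add_smul_sub, monomialShare_add_single,
    intervalIntegral.integral_const_mul, intervalIntegral.integral_mul_const, integral_pow,
    one_pow, zero_pow (Nat.succ_ne_zero _), Nat.cast_sum]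
  ring

end Share

section Axioms

variable {n : ℕ} {a b : Fin n → ℝ} {A : BAM n} {xbar x' : Fin n → ℝ}

theorem Linearity.apply_const_mul (hlin : Linearity a b A) (hxbar : xbar ∈ Set.uIcc a b)
    (hx' : x' ∈ Set.uIcc a b) {F : (Fin n → ℝ) → ℝ} (hF : AnalyticOnNhd ℝ F (Set.uIcc a b))
    (c : ℝ) : A xbar x' (fun x => c * F x) = c • A xbar x' F := by
  simpa using hlin xbar hxbar x' hx' F F hF hF c 0

theorem SymmetricMonotonicity.div_eq_div_of_pderiv'_eq (hsm : SymmetricMonotonicity a b A)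
    (hxbar : xbar ∈ Set.uIcc a b) (hx' : x' ∈ Set.uIcc a b) {F G : (Fin n → ℝ) → ℝ}
    (hF : AnalyticOnNhd ℝ F (Set.uIcc a b)) (hG : AnalyticOnNhd ℝ G (Set.uIcc a b))
    {i j : Fin n} (hi : xbar i ≠ x' i) (hj : xbar j ≠ x' j)
    (hFG : ∀ x ∈ Set.uIcc xbar x', pderiv' F i x = pderiv' G j x) :
    A xbar x' F i / (xbar i - x' i) = A xbar x' G j / (xbar j - x' j) :=
  le_antisymm ((hsm xbar hxbar x' hx' F G hF hG).1 i j hi hj fun x hx => (hFG x hx).le)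
    ((hsm xbar hxbar x' hx' G F hG hF).1 j i hj hi fun x hx => (hFG x hx).ge)

theorem apply_monomial_of_eq_zero_or_eq (hdummy : Dummy a b A)
    (hsm : SymmetricMonotonicity a b A) (hxbar : xbar ∈ Set.uIcc a b) (hx' : x' ∈ Set.uIcc a b)
    {m : Fin n → ℕ} {i : Fin n} (h : m i = 0 ∨ xbar i = x' i) :
    A xbar x' (monomial x' m) i = monomialShare xbar x' m i := by
  have hM := analyticOnNhd_monomial x' m (Set.uIcc a b)
  by_cases hmi : m i = 0
  · simp [monomialShare, hmi, hdummy xbar hxbar x' hx' _ hM i (doesNotVary_monomial x' hmi)]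
  · have hdi := h.resolve_left hmi
    simp [monomialShare, (hsm xbar hxbar x' hx' _ _ hM hM).2 i hdi, monomial_eq_zero x' hdi hmi]

theorem apply_monomial_add_single_div_eq (hlin : Linearity a b A)
    (hsm : SymmetricMonotonicity a b A) (hxbar : xbar ∈ Set.uIcc a b) (hx' : x' ∈ Set.uIcc a b)
    (p : Fin n → ℕ) {i j : Fin n} (hi : xbar i ≠ x' i) (hj : xbar j ≠ x' j) :
    A xbar x' (monomial x' (p + Pi.single i 1)) i / ((p i + 1) * (xbar i - x' i))
      = A xbar x' (monomial x' (p + Pi.single j 1)) j / ((p j + 1) * (xbar j - x' j)) := by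
  have hM (k : Fin n) := analyticOnNhd_monomial x' (p + Pi.single k 1) (Set.uIcc a b)
  have key := hsm.div_eq_div_of_pderiv'_eq hxbar hx'
    (F := fun y => (p i + 1 : ℝ)⁻¹ * monomial x' (p + Pi.single i 1) y)
    (G := fun y => (p j + 1 : ℝ)⁻¹ * monomial x' (p + Pi.single j 1) y)
    (analyticOnNhd_const.mul (hM i)) (analyticOnNhd_const.mul (hM j)) hi hj fun x _ => by
      rw [pderiv'_const_mul_monomial_add_single, pderiv'_const_mul_monomial_add_single,
        inv_mul_cancel_left₀ (by positivity), inv_mul_cancel_left₀ (by positivity)]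
  rw [hlin.apply_const_mul hxbar hx' (hM i), hlin.apply_const_mul hxbar hx' (hM j)] at key
  simpa only [Pi.smul_apply, smul_eq_mul, inv_mul_eq_div, div_div] using key

theorem apply_monomial_eq_monomialShare (hcomp : Completeness a b A) (hdummy : Dummy a b A)
    (hlin : Linearity a b A) (hsm : SymmetricMonotonicity a b A) (hxbar : xbar ∈ Set.uIcc a b)
    (hx' : x' ∈ Set.uIcc a b) (m : Fin n → ℕ) (i : Fin n) :
    A xbar x' (monomial x' m) i = monomialShare xbar x' m i := by
  induction hr : ∑ k, m k - m i using Nat.strong_induction_on generalizing m i with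
  | _ r ih =>
  by_cases hdeg : m i = 0 ∨ xbar i = x' i
  · exact apply_monomial_of_eq_zero_or_eq hdummy hsm hxbar hx' hdeg
  obtain ⟨hmi, hdi⟩ := not_or.1 hdeg
  have hothers : ∀ k ≠ i, A xbar x' (monomial x' m) k = monomialShare xbar x' m k := by
    intro k hki
    by_cases hdeg : m k = 0 ∨ xbar k = x' k
    · exact apply_monomial_of_eq_zero_or_eq hdummy hsm hxbar hx' hdeg
    obtain ⟨hmk, hdk⟩ := not_or.1 hdeg
    obtain ⟨p, rfl⟩ := exists_eq_add_single hmk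
    -- moving the unit of exponent from `k` to `i` lowers `‖m‖₁ - mᵢ` by one
    have hlt :
        ∑ l, (p + Pi.single i 1 : Fin n → ℕ) l - (p + Pi.single i 1 : Fin n → ℕ) i < r := by
      have hpi : p i ≤ ∑ l, p l :=
        Finset.single_le_sum (fun _ _ => Nat.zero_le _) (Finset.mem_univ i)
      rw [sum_add_single] at hr ⊢
      simp only [Pi.add_apply, Pi.single_eq_same, Pi.single_eq_of_ne hki.symm] at hr ⊢
      omega
    have hc (j : Fin n) (hj : xbar j ≠ x' j) : ((p j + 1 : ℝ) * (xbar j - x' j)) ≠ 0 :=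
      mul_ne_zero (by positivity) (sub_ne_zero.2 hj)
    rw [monomialShare_add_single, ← div_eq_iff (hc k hdk),
      apply_monomial_add_single_div_eq hlin hsm hxbar hx' p hdk hdi, ih _ hlt _ _ rfl,
      monomialShare_add_single, mul_div_cancel_right₀ _ (hc i hdi)]
  refine eq_of_sum_eq_of_forall_ne ?_ hothers
  rw [hcomp xbar hxbar x' hx' _ (analyticOnNhd_monomial x' m _), monomial_eq_zero x' rfl hmi,
    sub_zero, sum_monomialShare xbar x' (fun h => hmi (congr_fun h i))]

end Axioms

/-- **Agreement with IG on monomials**: a baseline attribution method on real analytic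
functions satisfying completeness, dummy, linearity, and symmetric monotonicity agrees
with Integrated Gradients on all monomials `[x − x']^m`; the `i`-th component equals
`(m_i/‖m‖₁)·[x̄ − x']^m` when `m ≠ 0`, and `0` when `m = 0`. -/
theorem agrees_with_IG_on_monomials {n : ℕ} (a b : Fin n → ℝ) (A : BAM n)
    (hcomp : Completeness a b A) (hdummy : Dummy a b A) (hlin : Linearity a b A)
    (hsm : SymmetricMonotonicity a b A) :
    ∀ xbar ∈ Set.uIcc a b, ∀ x' ∈ Set.uIcc a b, ∀ m : Fin n → ℕ,
      A xbar x' (monomial x' m) = IG xbar x' (monomial x' m) ∧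
      (m ≠ 0 → ∀ i, A xbar x' (monomial x' m) i
        = ((m i : ℝ) / ∑ k, (m k : ℝ)) * ∏ k, (xbar k - x' k) ^ m k) ∧
      (m = 0 → ∀ i, A xbar x' (monomial x' m) i = 0) := by
  intro xbar hxbar x' hx' m
  have hA := apply_monomial_eq_monomialShare hcomp hdummy hlin hsm hxbar hx' m
  refine ⟨funext fun i => (hA i).trans (IG_monomial_s13 xbar x' m i).symm, fun _ => hA, ?_⟩
  rintro rfl i
  simp [hA, monomialShare]
end

section
/- For any F ∈ F²(a,b), there exists an open set U ⊆ [a,b] with λ(U) = λ([a,b]) (λ the Lebesgue measure) such that for each x ∈ U: (1) there exist an open set B_x containing x and a real analytic function H_x on [a,b] with F ≡ H_x on B_x; (2) the gradient ∇F(x) exists; and (3) ∇F_α(x) → ∇F(x) as α → ∞, where F_α is the softplus approximation of F. -/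
/-!
Off a closed null set `Z`, every ReLU pre-activation `g` is either nonzero at `x` or vanishes
identically near `x`: the frontier of `g ⁻¹' {0}` is null because off the null set of the previous
layers `g` agrees locally with an analytic function, and a nonzero real analytic function on `ℝⁿ`
has a null zero set (Fubini, from the isolated zeros in dimension one). Near such an `x` each
ReLU is therefore the identity or zero, so the network agrees with an analytic function, and the
derivative `sigmoid (α g_α(x)) • Dg_α(x)` of the softplus layer tends to `Dg(x)` or to `0`
(when `g ≡ 0` near `x`, because then `Dg(x) = 0` and the sigmoid is bounded). The chain rule
carries the convergence of values and derivatives through the layers by induction.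
-/

open MeasureTheory Filter

/-- The softplus approximation of the network: every ReLU is replaced with the
parameterized softplus `s_α(z) = ln(1 + exp(αz))/α`. -/
noncomputable def NN.evalSoft (α : ℝ) : {k r : ℕ} → NN k r → (Fin k → ℝ) → Fin r → ℝ
  | _, _, .input _, x => x
  | _, _, .layer prev F s, x => fun i =>
      if s i then Real.log (1 + Real.exp (α * F (NN.evalSoft α prev x) i)) / α
      else F (NN.evalSoft α prev x) i

open Topology Set

section ZeroSets

theorem AnalyticOnNhd.volume_preimage_zero_real {f : ℝ → ℝ} (hf : AnalyticOnNhd ℝ f univ)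
    {x₀ : ℝ} (h₀ : f x₀ ≠ 0) : volume (f ⁻¹' {0}) = 0 := by
  have := ae_restrict_le_codiscreteWithin (μ := volume) MeasurableSet.univ
    (hf.preimage_zero_mem_codiscrete h₀)
  simpa only [Measure.restrict_univ, mem_ae_iff, ← preimage_compl, compl_compl] using this

theorem AnalyticOnNhd.prod_volume_preimage_zero {E : Type*} [NormedAddCommGroup E]
    [NormedSpace ℝ E] [MeasurableSpace E] [BorelSpace E] [SecondCountableTopology E]
    (μ : Measure E) [SFinite μ] {g : ℝ × E → ℝ} (hg : AnalyticOnNhd ℝ g univ) {p₀ : ℝ × E}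
    (h₀ : g p₀ ≠ 0) (hslice : ∀ t y, g (t, y) ≠ 0 → μ ((fun y => g (t, y)) ⁻¹' {0}) = 0) :
    (volume.prod μ) (g ⁻¹' {0}) = 0 := by
  have hline : AnalyticOnNhd ℝ (fun t => g (t, p₀.2)) univ :=
    hg.comp (analyticOnNhd_id.prod analyticOnNhd_const) (mapsTo_univ _ _)
  rw [Measure.measure_prod_null (isClosed_singleton.preimage hg.continuous).measurableSet]
  -- by the one-dimensional case, almost every slice is nonzero at `p₀.2`
  filter_upwards [measure_eq_zero_iff_ae_notMem.1 (hline.volume_preimage_zero_real h₀)]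
    with t ht
  exact hslice t p₀.2 ht

theorem AnalyticOnNhd.volume_preimage_zero {n : ℕ} {f : (Fin n → ℝ) → ℝ}
    (hf : AnalyticOnNhd ℝ f univ) {x₀ : Fin n → ℝ} (h₀ : f x₀ ≠ 0) :
    volume (f ⁻¹' {0}) = 0 := by
  induction n with
  | zero =>
    have : f ⁻¹' {0} = ∅ := eq_empty_of_forall_notMem fun x hx => h₀ (Subsingleton.elim x₀ x ▸ hx)
    rw [this, measure_empty]
  | succ n ih =>
    set e := Fin.consEquivL ℝ (fun _ : Fin (n + 1) => ℝ)
    have hfun : ⇑(MeasurableEquiv.piFinSuccAbove (fun _ : Fin (n + 1) => ℝ) 0).symm = e := by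
      ext p i
      simp [e]
    have he : MeasurePreserving e volume volume :=
      hfun ▸ (volume_preserving_piFinSuccAbove (fun _ : Fin (n + 1) => ℝ) 0).symm
    have hfe : AnalyticOnNhd ℝ (f ∘ e) univ := hf.comp (e.analyticOnNhd univ) (mapsTo_univ _ _)
    rw [← he.measure_preimage (isClosed_singleton.preimage hf.continuous).nullMeasurableSet,
      Measure.volume_eq_prod]
    refine hfe.prod_volume_preimage_zero volume (p₀ := (x₀ 0, Fin.tail x₀)) ?_ fun t y hty => ?_
    · have hx₀ : e (x₀ 0, Fin.tail x₀) = x₀ := by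
        ext i
        simp [e]
      simpa [hx₀] using h₀
    · exact ih (hfe.comp (analyticOnNhd_const.prod analyticOnNhd_id) (mapsTo_univ _ _)) hty

theorem AnalyticOnNhd.volume_frontier_preimage_zero {n : ℕ} {f : (Fin n → ℝ) → ℝ}
    (hf : AnalyticOnNhd ℝ f univ) : volume (frontier (f ⁻¹' {0})) = 0 := by
  by_cases h : ∃ x₀, f x₀ ≠ 0
  · obtain ⟨x₀, h₀⟩ := h
    exact measure_mono_null (isClosed_singleton.preimage hf.continuous).frontier_subset
      (hf.volume_preimage_zero h₀)
  · have : f ⁻¹' {0} = univ := eq_univ_of_forall fun x => not_not.1 fun hx => h ⟨x, hx⟩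
    simp [this]

end ZeroSets

section Softplus

open Real

noncomputable def softplus (α z : ℝ) : ℝ := log (1 + exp (α * z)) / α

theorem hasDerivAt_softplus {α : ℝ} (hα : α ≠ 0) (z : ℝ) :
    HasDerivAt (softplus α) (sigmoid (α * z)) z := by
  have h := (((hasDerivAt_id z).const_mul α).exp.const_add 1).log (by positivity) |>.div_const α
  refine h.congr_deriv ?_
  rw [sigmoid_def, exp_neg]
  field_simp
  simp only [id]
  ring

theorem abs_softplus_sub_max_le {α : ℝ} (hα : 0 < α) (z : ℝ) :
    |softplus α z - max z 0| ≤ log 2 / α := by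
  have hm : exp (α * max z 0) = max (exp (α * z)) 1 := by
    rw [mul_max_of_nonneg _ _ hα.le, mul_zero, ← exp_zero, Monotone.map_max exp_monotone]
  set m := α * max z 0
  have hlower : m ≤ log (1 + exp (α * z)) := by
    rw [← log_exp m]
    exact log_le_log (exp_pos m) (hm ▸ max_le (by linarith) (by linarith [exp_pos (α * z)]))
  have hupper : log (1 + exp (α * z)) ≤ log 2 + m := by
    rw [← log_exp m, ← log_mul two_ne_zero (exp_pos m).ne']
    refine log_le_log (by positivity) ?_
    rw [hm]
    linarith [le_max_left (exp (α * z)) 1, le_max_right (exp (α * z)) 1]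
  have hsub : softplus α z - max z 0 = (log (1 + exp (α * z)) - m) / α := by
    rw [softplus, sub_div, mul_div_cancel_left₀ _ hα.ne']
  rw [hsub, abs_div, abs_of_pos hα, abs_of_nonneg (sub_nonneg.2 hlower)]
  gcongr
  linarith

theorem tendsto_softplus {z : ℝ → ℝ} {z₀ : ℝ} (hz : Tendsto z atTop (𝓝 z₀)) :
    Tendsto (fun α => softplus α (z α)) atTop (𝓝 (max z₀ 0)) := by
  have hmax : Tendsto (fun α => max (z α) 0) atTop (𝓝 (max z₀ 0)) :=
    hz.max tendsto_const_nhds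
  have hdiff : Tendsto (fun α => softplus α (z α) - max (z α) 0) atTop (𝓝 0) := by
    refine squeeze_zero_norm' (a := fun α => log 2 / α) ?_ (tendsto_const_nhds.div_atTop tendsto_id)
    filter_upwards [eventually_gt_atTop 0] with α hα
    exact abs_softplus_sub_max_le hα (z α)
  simpa using hdiff.add hmax

theorem tendsto_sigmoid_mul_of_pos {z : ℝ → ℝ} {z₀ : ℝ} (hz : Tendsto z atTop (𝓝 z₀))
    (h₀ : 0 < z₀) : Tendsto (fun α => sigmoid (α * z α)) atTop (𝓝 1) :=
  tendsto_sigmoid_atTop.comp (tendsto_id.atTop_mul_pos h₀ hz)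

theorem tendsto_sigmoid_mul_of_neg {z : ℝ → ℝ} {z₀ : ℝ} (hz : Tendsto z atTop (𝓝 z₀))
    (h₀ : z₀ < 0) : Tendsto (fun α => sigmoid (α * z α)) atTop (𝓝 0) :=
  tendsto_sigmoid_atBot.comp (tendsto_id.atTop_mul_neg h₀ hz)

end Softplus

section FirstOrderLimits

variable {E F K : Type*} [NormedAddCommGroup E] [NormedSpace ℝ E] [NormedAddCommGroup F]
  [NormedSpace ℝ F] [NormedAddCommGroup K] [NormedSpace ℝ K]

def LocallyEqAnalytic (g : E → F) (x : E) : Prop :=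
  ∃ G : E → F, AnalyticOnNhd ℝ G univ ∧ g =ᶠ[𝓝 x] G

namespace LocallyEqAnalytic

variable {g : E → F} {x : E}

theorem differentiableAt (h : LocallyEqAnalytic g x) : DifferentiableAt ℝ g x := by
  obtain ⟨G, hG, hgG⟩ := h
  exact hgG.differentiableAt_iff.2 (hG x trivial).differentiableAt

theorem congr {g' : E → F} (h : LocallyEqAnalytic g x) (hg : g' =ᶠ[𝓝 x] g) :
    LocallyEqAnalytic g' x := by
  obtain ⟨G, hG, hgG⟩ := h
  exact ⟨G, hG, hg.trans hgG⟩

theorem comp {φ : F → K} (hφ : AnalyticOnNhd ℝ φ univ) (h : LocallyEqAnalytic g x) :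
    LocallyEqAnalytic (φ ∘ g) x := by
  obtain ⟨G, hG, hgG⟩ := h
  exact ⟨φ ∘ G, hφ.comp hG (mapsTo_univ _ _), hgG.fun_comp φ⟩

theorem pi {ι : Type*} [Fintype ι] {F' : ι → Type*} [∀ i, NormedAddCommGroup (F' i)]
    [∀ i, NormedSpace ℝ (F' i)] {g : E → ∀ i, F' i}
    (h : ∀ i, LocallyEqAnalytic (fun y => g y i) x) :
    LocallyEqAnalytic g x := by
  choose G hG hgG using h
  exact ⟨fun y i => G i y, AnalyticOnNhd.pi hG,
    (eventually_all.2 hgG).mono fun y hy => funext hy⟩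

end LocallyEqAnalytic

theorem ContinuousLinearMap.tendsto_pi {α ι : Type*} [Fintype ι] {F' : ι → Type*}
    [∀ i, NormedAddCommGroup (F' i)] [∀ i, NormedSpace ℝ (F' i)] {l : Filter α}
    {L : α → ∀ i, E →L[ℝ] F' i} {L₀ : ∀ i, E →L[ℝ] F' i}
    (h : ∀ i, Tendsto (fun a => L a i) l (𝓝 (L₀ i))) :
    Tendsto (fun a => ContinuousLinearMap.pi (L a)) l (𝓝 (ContinuousLinearMap.pi L₀)) := by
  rw [tendsto_iff_norm_sub_tendsto_zero]
  have hsum : Tendsto (fun a => ∑ i, ‖L a i - L₀ i‖) l (𝓝 0) := by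
    simpa using tendsto_finsetSum _ fun i _ => tendsto_iff_norm_sub_tendsto_zero.1 (h i)
  refine squeeze_zero (fun _ => norm_nonneg _) (fun a => ?_) hsum
  have : ContinuousLinearMap.pi (L a) - ContinuousLinearMap.pi L₀ =
      ContinuousLinearMap.pi (L a - L₀) := by
    ext; simp
  rw [this]
  exact ContinuousLinearMap.norm_pi_le_of_le
    (fun i => Finset.single_le_sum (f := fun i => ‖L a i - L₀ i‖) (fun _ _ => norm_nonneg _)
      (Finset.mem_univ i)) (by positivity)

structure HasFirstOrderLimitAt (f : ℝ → E → F) (g : E → F) (x : E) : Prop where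
  locallyEqAnalytic : LocallyEqAnalytic g x
  eventually_differentiableAt : ∀ᶠ α in atTop, DifferentiableAt ℝ (f α) x
  tendsto : Tendsto (fun α => f α x) atTop (𝓝 (g x))
  tendsto_fderiv : Tendsto (fun α => fderiv ℝ (f α) x) atTop (𝓝 (fderiv ℝ g x))

namespace HasFirstOrderLimitAt

variable {f : ℝ → E → F} {g : E → F} {x : E}

theorem of_analytic (hg : AnalyticOnNhd ℝ g univ) : HasFirstOrderLimitAt (fun _ => g) g x :=
  ⟨⟨g, hg, .rfl⟩, .of_forall fun _ => (hg x trivial).differentiableAt, tendsto_const_nhds,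
    tendsto_const_nhds⟩

theorem comp {φ : F → K} (hφ : AnalyticOnNhd ℝ φ univ) (h : HasFirstOrderLimitAt f g x) :
    HasFirstOrderLimitAt (fun α y => φ (f α y)) (fun y => φ (g y)) x where
  locallyEqAnalytic := h.locallyEqAnalytic.comp hφ
  eventually_differentiableAt := h.eventually_differentiableAt.mono fun _ hd =>
    (hφ _ trivial).differentiableAt.comp x hd
  tendsto := (hφ.continuous.tendsto _).comp h.tendsto
  tendsto_fderiv := by
    have hchain : ∀ᶠ α in atTop, (fderiv ℝ φ (f α x)).comp (fderiv ℝ (f α) x) =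
        fderiv ℝ (fun y => φ (f α y)) x :=
      h.eventually_differentiableAt.mono fun _ hd =>
        (fderiv_comp x (hφ _ trivial).differentiableAt hd).symm
    rw [fderiv_fun_comp x (hφ _ trivial).differentiableAt h.locallyEqAnalytic.differentiableAt]
    refine Tendsto.congr' hchain ?_
    have hφ' := ((hφ.contDiff (n := 1)).continuous_fderiv one_ne_zero).tendsto (g x)
    exact (isBoundedBilinearMap_comp.continuous.tendsto _).comp
      ((hφ'.comp h.tendsto).prodMk_nhds h.tendsto_fderiv)

theorem pi {ι : Type*} [Fintype ι] {F' : ι → Type*} [∀ i, NormedAddCommGroup (F' i)]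
    [∀ i, NormedSpace ℝ (F' i)] {f : ℝ → E → ∀ i, F' i} {g : E → ∀ i, F' i}
    (h : ∀ i, HasFirstOrderLimitAt (fun α y => f α y i) (fun y => g y i) x) :
    HasFirstOrderLimitAt f g x where
  locallyEqAnalytic := .pi fun i => (h i).locallyEqAnalytic
  eventually_differentiableAt := (eventually_all.2 fun i => (h i).eventually_differentiableAt).mono
    fun _ hd => differentiableAt_pi.2 hd
  tendsto := tendsto_pi_nhds.2 fun i => (h i).tendsto
  tendsto_fderiv := by
    have hpi : ∀ᶠ α in atTop, ContinuousLinearMap.pi (fun i => fderiv ℝ (fun y => f α y i) x) =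
        fderiv ℝ (f α) x :=
      (eventually_all.2 fun i => (h i).eventually_differentiableAt).mono fun _ hd =>
        (fderiv_pi hd).symm
    rw [fderiv_pi fun i => (h i).locallyEqAnalytic.differentiableAt]
    exact (ContinuousLinearMap.tendsto_pi fun i => (h i).tendsto_fderiv).congr' hpi

end HasFirstOrderLimitAt

theorem HasFirstOrderLimitAt.softplus_comp {f : ℝ → E → ℝ} {g : E → ℝ} {x : E}
    (h : HasFirstOrderLimitAt f g x) (hx : x ∉ frontier (g ⁻¹' {0})) :
    HasFirstOrderLimitAt (fun α y => softplus α (f α y)) (fun y => max (g y) 0) x := by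
  have hchain : ∀ᶠ α in atTop, DifferentiableAt ℝ (fun y => softplus α (f α y)) x ∧
      Real.sigmoid (α * f α x) • fderiv ℝ (f α) x = fderiv ℝ (fun y => softplus α (f α y)) x := by
    filter_upwards [h.eventually_differentiableAt, eventually_ne_atTop 0] with α hd hα
    have := (hasDerivAt_softplus hα _).comp_hasFDerivAt x hd.hasFDerivAt
    exact ⟨this.differentiableAt, this.fderiv.symm⟩
  have hg := h.locallyEqAnalytic.differentiableAt.continuousAt
  have of_nonpos (hle : ∀ᶠ y in 𝓝 x, g y ≤ 0)
      (hlim : Tendsto (fun α => Real.sigmoid (α * f α x) • fderiv ℝ (f α) x) atTop (𝓝 0)) :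
      HasFirstOrderLimitAt (fun α y => softplus α (f α y)) (fun y => max (g y) 0) x := by
    have hev : (fun y => max (g y) 0) =ᶠ[𝓝 x] fun _ => 0 := hle.mono fun _ => max_eq_right
    refine ⟨⟨_, analyticOnNhd_const, hev⟩, hchain.mono fun _ => And.left,
      tendsto_softplus h.tendsto, ?_⟩
    rw [hev.fderiv_eq, fderiv_const_apply]
    exact hlim.congr' (hchain.mono fun _ => And.right)
  rcases lt_trichotomy (g x) 0 with hneg | hzero | hpos
  · refine of_nonpos ((hg.eventually (gt_mem_nhds hneg)).mono fun _ => le_of_lt) ?_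
    simpa using (tendsto_sigmoid_mul_of_neg h.tendsto hneg).smul h.tendsto_fderiv
  · have hg0 : g =ᶠ[𝓝 x] fun _ => 0 :=
      mem_interior_iff_mem_nhds.1 ((mem_interior_iff_notMem_frontier (s := g ⁻¹' {0}) hzero).2 hx)
    refine of_nonpos (hg0.mono fun _ hy => hy.le) ?_
    have hD : fderiv ℝ g x = 0 := by rw [hg0.fderiv_eq, fderiv_const_apply]
    refine IsBoundedUnder.smul_tendsto_zero (isBoundedUnder_of ⟨1, fun α => ?_⟩)
      (hD ▸ h.tendsto_fderiv)
    simpa [abs_of_pos (Real.sigmoid_pos _)] using Real.sigmoid_le_one _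
  · have hev : (fun y => max (g y) 0) =ᶠ[𝓝 x] g :=
      (hg.eventually (lt_mem_nhds hpos)).mono fun _ hy => max_eq_left hy.le
    refine ⟨h.locallyEqAnalytic.congr hev, hchain.mono fun _ => And.left,
      tendsto_softplus h.tendsto, ?_⟩
    rw [hev.fderiv_eq]
    simpa using ((tendsto_sigmoid_mul_of_pos h.tendsto hpos).smul h.tendsto_fderiv).congr'
      (hchain.mono fun _ => And.right)

end FirstOrderLimits

theorem volume_frontier_preimage_zero_of_locallyEqAnalytic {n : ℕ} {g : (Fin n → ℝ) → ℝ}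
    {Z : Set (Fin n → ℝ)} (hZ : volume Z = 0) (hg : ∀ x ∉ Z, LocallyEqAnalytic g x) :
    volume (frontier (g ⁻¹' {0})) = 0 := by
  refine measure_mono_null (subset_sdiff_union _ Z) (measure_union_null ?_ hZ)
  refine measure_null_of_locally_null _ fun x hx => ?_
  obtain ⟨G, hG, hgG⟩ := hg x hx.2
  obtain ⟨V, hgV, hVo, hxV⟩ := eventually_nhds_iff.1 hgG
  have hV : frontier (g ⁻¹' {0}) ∩ V = frontier (G ⁻¹' {0}) ∩ V := by
    have hzeros : g ⁻¹' {0} ∩ V = G ⁻¹' {0} ∩ V := by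
      rw [inter_comm, EqOn.inter_preimage_eq hgV, inter_comm]
    rw [← frontier_inter_open_inter hVo, hzeros, frontier_inter_open_inter hVo]
  refine ⟨V ∩ (frontier (g ⁻¹' {0}) \ Z),
    inter_mem (mem_nhdsWithin_of_mem_nhds (hVo.mem_nhds hxV)) self_mem_nhdsWithin,
    measure_mono_null ?_ hG.volume_frontier_preimage_zero⟩
  rintro y ⟨hyV, hy, -⟩
  exact (hV ▸ ⟨hy, hyV⟩ : y ∈ frontier (G ⁻¹' {0}) ∩ V).1

theorem NN.hasFirstOrderLimitAt_layer {k l r : ℕ} {prev : NN k l}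
    {F : (Fin l → ℝ) → Fin r → ℝ} (s : Fin r → Bool) {x : Fin k → ℝ}
    (hF : ∀ i, AnalyticOnNhd ℝ (fun z => F z i) univ)
    (hprev : HasFirstOrderLimitAt (fun α => prev.evalSoft α) prev.eval x)
    (hx : ∀ i, x ∉ frontier ((fun y => F (prev.eval y) i) ⁻¹' {0})) :
    HasFirstOrderLimitAt (fun α => (NN.layer prev F s).evalSoft α) (NN.layer prev F s).eval x := by
  refine .pi fun i => ?_
  have hpre := hprev.comp (hF i)
  cases hs : s i
  · simpa [NN.eval, NN.evalSoft, hs] using hpre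
  · simpa [NN.eval, NN.evalSoft, hs, softplus] using hpre.softplus_comp (hx i)

theorem NN.exists_null_hasFirstOrderLimitAt {n r : ℕ} (net : NN n r) (hnet : net.IsAnalytic) :
    ∃ Z : Set (Fin n → ℝ), IsClosed Z ∧ volume Z = 0 ∧
      ∀ x ∉ Z, HasFirstOrderLimitAt (fun α => net.evalSoft α) net.eval x := by
  induction net with
  | input =>
    refine ⟨∅, isClosed_empty, measure_empty, fun _ _ => ?_⟩
    have heval : (NN.input n).eval = fun y => y := funext fun y => by rw [NN.eval]
    have hsoft : ∀ α, (NN.input n).evalSoft α = fun y => y := fun α => funext fun y => by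
      rw [NN.evalSoft]
    simpa only [heval, hsoft] using .of_analytic analyticOnNhd_id
  | layer prev F s ih =>
    rw [NN.IsAnalytic] at hnet
    obtain ⟨hprev, hF⟩ := hnet
    obtain ⟨Z, hZc, hZ, hlim⟩ := ih hprev
    refine ⟨Z ∪ ⋃ i, frontier ((fun y => F (prev.eval y) i) ⁻¹' {0}),
      hZc.union (isClosed_iUnion_of_finite fun _ => isClosed_frontier),
      measure_union_null hZ (measure_iUnion_null fun i =>
        volume_frontier_preimage_zero_of_locallyEqAnalytic hZ fun x hx =>
          ((hlim x hx).comp (hF i)).locallyEqAnalytic), fun x hx => ?_⟩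
    simp only [mem_union, mem_iUnion, not_or, not_exists] at hx
    exact NN.hasFirstOrderLimitAt_layer s hF (hlim x hx.1) hx.2

/-- **Topology of softplus approximations**: for any `F ∈ F²(a,b)` there is an open
set `U ⊆ [a,b]` of full measure such that at each `x ∈ U`: (1) `F` agrees with a real
analytic function on `[a,b]` in an open neighborhood `B_x` of `x`; (2) the gradient
`∇F(x)` exists; and (3) `∇F_α(x) → ∇F(x)` as `α → ∞`, where `F_α` is the softplus
approximation of `F`. -/
theorem softplus_approximation_topology {n : ℕ} (a b : Fin n → ℝ)
    (net : NN n 1) (hnet : net.IsAnalytic) :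
    ∃ U : Set (Fin n → ℝ), U ⊆ Set.uIcc a b ∧ IsOpen U ∧
      volume U = volume (Set.uIcc a b) ∧
      ∀ x ∈ U,
        (∃ B : Set (Fin n → ℝ), IsOpen B ∧ x ∈ B ∧
          ∃ H : (Fin n → ℝ) → ℝ, AnalyticOnNhd ℝ H (Set.uIcc a b) ∧
            Set.EqOn (fun y => net.eval y 0) H (B ∩ Set.uIcc a b)) ∧
        DifferentiableAt ℝ (fun y => net.eval y 0) x ∧
        Tendsto (fun α : ℝ => fderiv ℝ (fun y => net.evalSoft α y 0) x) atTop
          (nhds (fderiv ℝ (fun y => net.eval y 0) x)) := by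
  obtain ⟨Z, hZc, hZ, hlim⟩ := net.exists_null_hasFirstOrderLimitAt hnet
  refine ⟨interior (uIcc a b) \ Z, sdiff_subset.trans interior_subset,
    isOpen_interior.sdiff hZc, ?_, fun x hx => ?_⟩
  · have hconv : Convex ℝ (uIcc a b) := convex_Icc _ _
    rw [measure_sdiff_null hZ, ← self_sdiff_frontier,
      measure_sdiff_null (hconv.addHaar_frontier volume)]
  have h₀ := (hlim x hx.2).comp (ContinuousLinearMap.proj (R := ℝ) (φ := fun _ : Fin 1 => ℝ) 0
    |>.analyticOnNhd univ)
  obtain ⟨H, hH, hnetH⟩ := h₀.locallyEqAnalytic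
  obtain ⟨B, hBH, hBo, hxB⟩ := eventually_nhds_iff.1 hnetH
  exact ⟨⟨B, hBo, hxB, H, hH.mono (subset_univ _), fun y hy => hBH y hy.1⟩,
    h₀.locallyEqAnalytic.differentiableAt, h₀.tendsto_fderiv⟩
end

section
/- For any F ∈ F²(a,b), the softplus approximations converge uniformly: F_α → F uniformly on [a,b] as α → ∞. -/
open MeasureTheory Filter

lemma softplus_bound {α : ℝ} (hα : 0 < α) (z : ℝ) :
    |Real.log (1 + Real.exp (α * z)) / α - max z 0| ≤ Real.log 2 / α := by
  have he : 0 < Real.exp (α * z) := Real.exp_pos _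
  have h1 : max (α * z) 0 ≤ Real.log (1 + Real.exp (α * z)) := by
    refine max_le ?_ (Real.log_nonneg (by linarith))
    calc α * z = Real.log (Real.exp (α * z)) := (Real.log_exp _).symm
      _ ≤ Real.log (1 + Real.exp (α * z)) := Real.log_le_log he (by linarith)
  have h2 : Real.log (1 + Real.exp (α * z)) ≤ Real.log 2 + max (α * z) 0 := by
    have h1' : (1:ℝ) ≤ Real.exp (max (α * z) 0) := Real.one_le_exp (le_max_right _ _)
    have h2' : Real.exp (α * z) ≤ Real.exp (max (α * z) 0) := Real.exp_le_exp.mpr (le_max_left _ _)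
    calc Real.log (1 + Real.exp (α * z)) ≤ Real.log (2 * Real.exp (max (α * z) 0)) :=
          Real.log_le_log (by linarith) (by linarith)
      _ = Real.log 2 + max (α * z) 0 := by
          rw [Real.log_mul two_ne_zero (Real.exp_ne_zero _), Real.log_exp]
  have hmax : α * max z 0 = max (α * z) 0 := by
    rw [mul_max_of_nonneg _ _ hα.le, mul_zero]
  rw [show Real.log (1 + Real.exp (α * z)) / α - max z 0
      = (Real.log (1 + Real.exp (α * z)) - α * max z 0) / α by field_simp]
  rw [abs_div, abs_of_pos hα]
  gcongr
  rw [abs_le]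
  constructor <;> rw [hmax] <;> linarith


@[simp] lemma NN.eval_input (k : ℕ) (x : Fin k → ℝ) : (NN.input k).eval x = x := by
  simp [NN.eval]

@[simp] lemma NN.eval_layer {k l r : ℕ} (prev : NN k l) (F : (Fin l → ℝ) → (Fin r → ℝ))
    (s : Fin r → Bool) (x : Fin k → ℝ) :
    (prev.layer F s).eval x
      = fun i => if s i then max (F (prev.eval x) i) 0 else F (prev.eval x) i := by
  simp [NN.eval]

@[simp] lemma NN.evalSoft_input (α : ℝ) (k : ℕ) (x : Fin k → ℝ) :
    (NN.input k).evalSoft α x = x := by simp [NN.evalSoft]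

@[simp] lemma NN.evalSoft_layer (α : ℝ) {k l r : ℕ} (prev : NN k l)
    (F : (Fin l → ℝ) → (Fin r → ℝ)) (s : Fin r → Bool) (x : Fin k → ℝ) :
    (prev.layer F s).evalSoft α x
      = fun i => if s i then Real.log (1 + Real.exp (α * F (prev.evalSoft α x) i)) / α
          else F (prev.evalSoft α x) i := by
  simp [NN.evalSoft]

lemma NN.key {k r : ℕ} (net : NN k r) (h : net.IsAnalytic) :
    Continuous net.eval ∧ ∀ s : Set (Fin k → ℝ), IsCompact s →
      TendstoUniformlyOn (fun α x => net.evalSoft α x) net.eval atTop s := by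
  induction net with
  | input =>
    refine ⟨?_, fun s _ => ?_⟩
    · have : NN.eval (NN.input k) = fun x => x := funext fun x => NN.eval_input k x
      rw [this]; exact continuous_id
    rw [Metric.tendstoUniformlyOn_iff]
    intro ε hε
    filter_upwards with α x _
    simpa [NN.eval, NN.evalSoft] using hε
  | layer prev F sb ih =>
    simp only [NN.IsAnalytic] at h
    obtain ⟨hprev, hF⟩ := h
    obtain ⟨hc, hu⟩ := ih hprev
    have hFc : Continuous F := continuous_pi fun i =>
      continuousOn_univ.mp (hF i).continuousOn
    have hceval : Continuous (NN.eval (NN.layer prev F sb)) := by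
      refine continuous_pi fun i => ?_
      have hFi : Continuous fun x => F (prev.eval x) i :=
        (continuous_apply i).comp (hFc.comp hc)
      simp only [NN.eval_layer]
      cases hsb : sb i <;> simp only [hsb, if_true, if_false, Bool.false_eq_true]
      · exact hFi
      · exact hFi.max continuous_const
    refine ⟨hceval, fun s hs => ?_⟩
    set K : Set (Fin _ → ℝ) := prev.eval '' s with hK
    have hKc : IsCompact K := hs.image hc
    have hK1c : IsCompact (Metric.cthickening 1 K) := hKc.cthickening
    have hUC : UniformContinuousOn F (Metric.cthickening 1 K) :=
      hK1c.uniformContinuousOn_of_continuous hFc.continuousOn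
    rw [Metric.tendstoUniformlyOn_iff]
    intro ε hε
    obtain ⟨δ, hδ, hδ'⟩ := Metric.uniformContinuousOn_iff.mp hUC (ε/2) (half_pos hε)
    have h1 := hu s hs
    rw [Metric.tendstoUniformlyOn_iff] at h1
    filter_upwards [h1 (min δ 1) (by positivity),
      Filter.eventually_ge_atTop (max 1 (2 * Real.log 2 / ε))] with α hα1 hα2 x hx
    have hαpos : (0:ℝ) < α := lt_of_lt_of_le one_pos (le_trans (le_max_left _ _) hα2)
    have hlog : Real.log 2 / α ≤ ε / 2 := by
      have h2 : 2 * Real.log 2 / ε ≤ α := le_trans (le_max_right _ _) hα2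
      rw [div_le_iff₀ hε] at h2
      rw [div_le_iff₀ hαpos]
      nlinarith [Real.log_pos (by norm_num : (1:ℝ) < 2)]
    set v := prev.eval x with hv
    set u := NN.evalSoft α prev x with hu2
    have hd : dist v u < min δ 1 := hα1 x hx
    have hvK1 : v ∈ Metric.cthickening 1 K :=
      Metric.self_subset_cthickening K ⟨x, hx, rfl⟩
    have huK1 : u ∈ Metric.cthickening 1 K := by
      apply Metric.mem_cthickening_of_dist_le u v 1 K ⟨x, hx, rfl⟩
      exact le_of_lt (lt_of_lt_of_le (dist_comm v u ▸ hd) (min_le_right _ _))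
    have hFd : dist (F v) (F u) < ε / 2 :=
      hδ' v hvK1 u huK1 (lt_of_lt_of_le hd (min_le_left _ _))
    rw [dist_pi_lt_iff hε]
    intro i
    have hFi : |F v i - F u i| < ε / 2 :=
      lt_of_le_of_lt (Real.dist_eq (F v i) (F u i) ▸ dist_le_pi_dist (F v) (F u) i) hFd
    simp only [NN.eval_layer, NN.evalSoft_layer, ← hv, ← hu2]
    cases hsb : sb i <;> simp only [if_true, if_false, Bool.false_eq_true]
    · rw [Real.dist_eq]; linarith
    · rw [Real.dist_eq]
      have hsoft := softplus_bound hαpos (F u i)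
      have hlip : |max (F v i) 0 - max (F u i) 0| ≤ |F v i - F u i| :=
        abs_max_sub_max_le_abs _ _ _
      have tri : |max (F v i) 0 - Real.log (1 + Real.exp (α * F u i)) / α|
          ≤ |max (F v i) 0 - max (F u i) 0|
            + |max (F u i) 0 - Real.log (1 + Real.exp (α * F u i)) / α| :=
        abs_sub_le _ _ _
      have hcomm : |max (F u i) 0 - Real.log (1 + Real.exp (α * F u i)) / α|
          = |Real.log (1 + Real.exp (α * F u i)) / α - max (F u i) 0| := abs_sub_comm _ _
      linarith

/-- **Uniform convergence of softplus approximations**: for any `F ∈ F²(a,b)`, the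
softplus approximations `F_α` converge to `F` uniformly on `[a,b]` as `α → ∞`. -/
theorem softplus_uniform_convergence {n : ℕ} (a b : Fin n → ℝ)
    (net : NN n 1) (hnet : net.IsAnalytic) :
    TendstoUniformlyOn (fun (α : ℝ) (x : Fin n → ℝ) => net.evalSoft α x 0)
      (fun x => net.eval x 0) atTop (Set.uIcc a b) := by
  have hcompact : IsCompact (Set.uIcc a b) := by
    rw [Set.uIcc]; exact isCompact_Icc
  have h := (NN.key net hnet).2 _ hcompact
  rw [Metric.tendstoUniformlyOn_iff] at h ⊢
  intro ε hε
  filter_upwards [h ε hε] with α hα x hx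
  exact lt_of_le_of_lt (dist_le_pi_dist (net.eval x) (net.evalSoft α x) 0) (hα x hx)
end

section
/- On the domain [0,1]² ⊆ ℝ², the path method A^γ defined componentwise by the monotone path function γ_i(x̄, x', t) = x'_i + (x̄_i − x'_i)·t^{(x̄_i − x'_i)²} satisfies the symmetry-preserving axiom (it equals Integrated Gradients whenever x̄_1 = x̄_2 and x'_1 = x'_2, since then γ is the straight-line path), yet A^γ is not the Integrated Gradients method: there exist an input x̄, baseline x', and continuously differentiable F with A^γ(x̄, x', F) ≠ IG(x̄, x', F). Hence symmetry-preserving alone does not characterize IG among monotone path methods. -/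
open MeasureTheory

/-- The path method for a path `γ`: `A^γ_i(F) = ∫₀¹ (∂F/∂x_i)(γ(t))·γ_i'(t) dt`. -/
noncomputable def pathMethod {n : ℕ} (γ : ℝ → (Fin n → ℝ)) (F : (Fin n → ℝ) → ℝ) :
    Fin n → ℝ :=
  fun i => ∫ t in (0:ℝ)..1, pderiv' F i (γ t) * deriv (fun s => γ s i) t

/-- The counterexample monotone path function on `[0,1]²`:
`γ_i(x̄, x', t) = x'_i + (x̄_i − x'_i)·t^{(x̄_i − x'_i)²}` (real exponent). -/
noncomputable def gammaEx (xbar x' : Fin 2 → ℝ) (t : ℝ) : Fin 2 → ℝ :=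
  fun i => x' i + (xbar i - x' i) * t ^ (((xbar i - x' i) ^ 2 : ℝ))

/-
When `x̄` and `x'` lie on the diagonal, so does the whole path `γ`, and on the diagonal a
swap-invariant `F` has equal partial derivatives; hence the two path integrals coincide.
For `x̄ = (1, 1/2)`, `x' = 0` and `F x = x₀ x₁`, the path method gives `∫₀¹ t^{1/4}/2 dt = 2/5`
in the first coordinate, while Integrated Gradients gives `∫₀¹ t/2 dt = 1/4`.
-/

lemma Equiv.comp_swap_eq_self {α β : Type*} [DecidableEq α] {i j : α} {y : α → β}
    (hy : y i = y j) : y ∘ Equiv.swap i j = y := by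
  rw [Equiv.comp_swap_eq_update, hy, Function.update_eq_self, ← hy, Function.update_eq_self]

section Symmetry

variable {n : ℕ} {i j : Fin n}

lemma pderiv'_eq_of_swap_invariant {F : (Fin n → ℝ) → ℝ}
    (hF : ∀ x, F (x ∘ Equiv.swap i j) = F x) {y : Fin n → ℝ} (hy : y i = y j) :
    pderiv' F i y = pderiv' F j y := by
  have hupdate : ∀ t, F (Function.update y i t) = F (Function.update y j t) := fun t => by
    rw [← hF (Function.update y j t), Function.update_comp_equiv, Equiv.comp_swap_eq_self hy,
      Equiv.symm_swap, Equiv.swap_apply_right]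
  simp only [pderiv', hupdate, hy]

lemma pathMethod_eq_of_swap_invariant {F : (Fin n → ℝ) → ℝ}
    (hF : ∀ x, F (x ∘ Equiv.swap i j) = F x) {γ : ℝ → Fin n → ℝ} (hγ : ∀ t, γ t i = γ t j) :
    pathMethod γ F i = pathMethod γ F j := by
  have hcoord : (fun s => γ s i) = fun s => γ s j := funext hγ
  simp only [pathMethod, hcoord, pderiv'_eq_of_swap_invariant hF (hγ _)]

end Symmetry

lemma gammaEx_apply_zero_eq_one {xbar x' : Fin 2 → ℝ} (hxbar : xbar 0 = xbar 1)
    (hx' : x' 0 = x' 1) (t : ℝ) : gammaEx xbar x' t 0 = gammaEx xbar x' t 1 := by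
  simp only [gammaEx, hxbar, hx']

lemma pderiv'_mul_left {n : ℕ} {i j : Fin n} (hij : i ≠ j) (x : Fin n → ℝ) :
    pderiv' (fun x => x i * x j) i x = x j := by
  have hslice :
      (fun t => Function.update x i t i * Function.update x i t j) = fun t => t * x j := by
    funext t
    simp [Function.update_of_ne hij.symm]
  rw [pderiv', hslice, deriv_mul_const_field, deriv_id'', one_mul]

lemma contDiff_mul_coord {n : ℕ} (i j : Fin n) : ContDiff ℝ 1 (fun x : Fin n → ℝ => x i * x j) :=
  (contDiff_apply ℝ ℝ i).mul (contDiff_apply ℝ ℝ j)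

lemma pathMethod_gammaEx_mul_apply_zero :
    pathMethod (gammaEx ![1, 1/2] 0) (fun x => x 0 * x 1) 0 = 2/5 := by
  have hfirst : (fun s => gammaEx ![1, 1/2] 0 s 0) = id := by
    funext s
    norm_num [gammaEx]
  have hintegrand : (fun t => pderiv' (fun x => x 0 * x 1) 0 (gammaEx ![1, 1/2] 0 t) *
      deriv (fun s => gammaEx ![1, 1/2] 0 s 0) t) = fun t => (1/2 : ℝ) * t ^ (1/4 : ℝ) := by
    funext t
    rw [hfirst, deriv_id, pderiv'_mul_left (by decide), mul_one]
    norm_num [gammaEx]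
  rw [pathMethod, hintegrand, intervalIntegral.integral_const_mul,
    integral_rpow (Or.inl (by norm_num))]
  norm_num

lemma IG_mul_apply_zero : IG ![1, 1/2] 0 (fun x => x 0 * x 1) 0 = 1/4 := by
  have hintegrand : (fun t : ℝ => pderiv' (fun x => x 0 * x 1) 0 (0 + t • (![1, 1/2] - 0)))
      = fun t => t * (1/2 : ℝ) := by
    funext t
    rw [pderiv'_mul_left (by decide)]
    norm_num
  rw [IG, hintegrand, intervalIntegral.integral_mul_const, integral_id]
  norm_num

/-- **Symmetry-preserving does not characterize IG among monotone path methods**: on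
`[0,1]²`, the path method associated with `γ_i(x̄, x', t) = x'_i + (x̄_i − x'_i)·
t^{(x̄_i − x'_i)²}` satisfies the symmetry-preserving axiom, yet it is not the
Integrated Gradients method: there exist an input `x̄`, baseline `x'`, and continuously
differentiable `F` with `A^γ(x̄, x', F) ≠ IG(x̄, x', F)`. -/
theorem symmetry_preserving_insufficient :
    (∀ F : (Fin 2 → ℝ) → ℝ, ContDiff ℝ 1 F →
      ∀ xbar ∈ Set.Icc (0 : Fin 2 → ℝ) 1, ∀ x' ∈ Set.Icc (0 : Fin 2 → ℝ) 1,
        (∀ x : Fin 2 → ℝ, F ![x 1, x 0] = F x) →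
        xbar 0 = xbar 1 → x' 0 = x' 1 →
        pathMethod (gammaEx xbar x') F 0 = pathMethod (gammaEx xbar x') F 1) ∧
    (∃ xbar ∈ Set.Icc (0 : Fin 2 → ℝ) 1, ∃ x' ∈ Set.Icc (0 : Fin 2 → ℝ) 1,
      ∃ F : (Fin 2 → ℝ) → ℝ, ContDiff ℝ 1 F ∧
        pathMethod (gammaEx xbar x') F ≠ IG xbar x' F) := by
  constructor
  · intro F _ xbar _ x' _ hsym hxbar hx'
    have hswap : ∀ x, F (x ∘ Equiv.swap 0 1) = F x := fun x => by
      convert hsym x using 2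
      funext k
      fin_cases k <;> rfl
    exact pathMethod_eq_of_swap_invariant hswap (gammaEx_apply_zero_eq_one hxbar hx')
  · refine ⟨![1, 1/2], ?_, 0, ?_, fun x => x 0 * x 1, contDiff_mul_coord 0 1, fun h => ?_⟩
    · constructor <;> intro i <;> fin_cases i <;> norm_num
    · constructor <;> intro i <;> fin_cases i <;> norm_num
    · have h0 := congrFun h 0
      rw [pathMethod_gammaEx_mul_apply_zero, IG_mul_apply_zero] at h0
      norm_num at h0
end
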